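/- arXiv:2602.21423 — 6 statements merged into one kernel-verified Lean document; each statement's English description precedes it below -/
import Mathlib

section
/- Let X₁, …, X_k be real random variables (not necessarily independent) such that for all x > 0 and each i, P(|X_i| ≥ x) ≤ 2 exp(−x²/(2(b + a x))) for fixed constants a, b > 0. Then there is a universal constant K such that E(max_{1≤i≤k} |X_i|²) ≤ 4K² (a log(1+k) + √b √(log(1+k)))². -/
open MeasureTheory

section Aux
open Real Set Filter Topology


lemma aux_exp_int {c : ℝ} (hc : 0 < c) (t₀ : ℝ) :
    IntegrableOn (fun t => Real.exp (-t / c)) (Ioi t₀) volume ∧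
      ∫ t in Ioi t₀, Real.exp (-t / c) = c * Real.exp (-t₀ / c) := by
  have hg : ∀ x ∈ Ici t₀, HasDerivAt (fun t => -c * Real.exp (-t / c))
      (Real.exp (-x / c)) x := by
    intro x _
    have h1 : HasDerivAt (fun t : ℝ => -t / c) (-1 / c) x := by
      simpa using (hasDerivAt_id x).neg.div_const c
    have h2 := ((Real.hasDerivAt_exp (-x / c)).comp x h1).const_mul (-c)
    refine HasDerivAt.congr_deriv h2 ?_
    field_simp
  have hpos : ∀ x ∈ Ioi t₀, 0 ≤ Real.exp (-x / c) := fun x _ => (Real.exp_pos _).le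
  have hlim : Tendsto (fun t => -c * Real.exp (-t / c)) atTop (𝓝 0) := by
    have hv : Tendsto (fun t : ℝ => t / c) atTop atTop :=
      tendsto_id.atTop_div_const hc
    have hE : Tendsto (fun t : ℝ => Real.exp (-t / c)) atTop (𝓝 0) := by
      have h := Real.tendsto_exp_atBot.comp (tendsto_neg_atTop_atBot.comp hv)
      refine h.congr fun t => ?_
      simp [Function.comp, neg_div]
    simpa using hE.const_mul (-c)
  refine ⟨integrableOn_Ioi_deriv_of_nonneg' hg hpos hlim, ?_⟩
  have := integral_Ioi_of_hasDerivAt_of_nonneg' hg hpos hlim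
  rw [this]; ring


lemma aux_sqrt_int {a : ℝ} (ha : 0 < a) {t₀ : ℝ} (ht₀ : 0 < t₀) :
    IntegrableOn (fun t => Real.exp (-Real.sqrt t / (4 * a))) (Ioi t₀) volume ∧
      ∫ t in Ioi t₀, Real.exp (-Real.sqrt t / (4 * a)) =
        (8 * a * Real.sqrt t₀ + 32 * a ^ 2) * Real.exp (-Real.sqrt t₀ / (4 * a)) := by
  set g : ℝ → ℝ := fun t => -((8 * a * Real.sqrt t + 32 * a ^ 2) *
    Real.exp (-Real.sqrt t / (4 * a))) with hgdef
  have hg : ∀ x ∈ Ici t₀, HasDerivAt g (Real.exp (-Real.sqrt x / (4 * a))) x := by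
    intro x hx
    have hxpos : 0 < x := lt_of_lt_of_le ht₀ hx
    have hsx : 0 < Real.sqrt x := Real.sqrt_pos.mpr hxpos
    have hs : HasDerivAt Real.sqrt (1 / (2 * Real.sqrt x)) x :=
      Real.hasDerivAt_sqrt hxpos.ne'
    have hinner : HasDerivAt (fun t => -Real.sqrt t / (4 * a))
        (-(1 / (2 * Real.sqrt x)) / (4 * a)) x := hs.neg.div_const (4 * a)
    have hE : HasDerivAt (fun t => Real.exp (-Real.sqrt t / (4 * a)))
        (Real.exp (-Real.sqrt x / (4 * a)) * (-(1 / (2 * Real.sqrt x)) / (4 * a))) x :=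
      (Real.hasDerivAt_exp _).comp x hinner
    have hP : HasDerivAt (fun t => 8 * a * Real.sqrt t + 32 * a ^ 2)
        (8 * a * (1 / (2 * Real.sqrt x))) x := ((hs.const_mul (8 * a)).add_const _)
    have hmul := (hP.mul hE).neg
    refine HasDerivAt.congr_deriv hmul ?_
    have hx2 : Real.sqrt x ≠ 0 := hsx.ne'
    field_simp
    ring
  have hpos : ∀ x ∈ Ioi t₀, 0 ≤ Real.exp (-Real.sqrt x / (4 * a)) :=
    fun x _ => (Real.exp_pos _).le
  have hsqrt : Tendsto Real.sqrt atTop atTop := by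
    rw [tendsto_atTop_atTop]
    intro N
    refine ⟨max N 0 ^ 2, fun x hx => ?_⟩
    have h1 : max N 0 ≤ Real.sqrt x := by
      rw [show max N 0 = Real.sqrt (max N 0 ^ 2) from (Real.sqrt_sq (le_max_right N 0)).symm]
      exact Real.sqrt_le_sqrt hx
    exact le_trans (le_max_left N 0) h1
  have h1 : Tendsto (fun u : ℝ => (8 * a * u + 32 * a ^ 2) * Real.exp (-u / (4 * a)))
      atTop (𝓝 0) := by
    have ha4 : (0:ℝ) < 4 * a := by linarith
    have hv : Tendsto (fun u : ℝ => u / (4 * a)) atTop atTop :=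
      tendsto_id.atTop_div_const ha4
    have h0 : Tendsto (fun u : ℝ => u / (4 * a) * Real.exp (-(u / (4 * a)))) atTop (𝓝 0) := by
      have h := (tendsto_pow_mul_exp_neg_atTop_nhds_zero 1).comp hv
      refine h.congr fun u => ?_
      simp [Function.comp]
    have hE0 : Tendsto (fun u : ℝ => Real.exp (-(u / (4 * a)))) atTop (𝓝 0) := by
      have h := Real.tendsto_exp_atBot.comp (tendsto_neg_atTop_atBot.comp hv)
      exact h.congr fun u => by simp [Function.comp]
    have h := (h0.const_mul (32 * a ^ 2)).add (hE0.const_mul (32 * a ^ 2))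
    rw [mul_zero, add_zero] at h
    refine h.congr fun u => ?_
    rw [neg_div]
    field_simp
    ring
  have hlim : Tendsto g atTop (𝓝 0) := by
    have h := (h1.comp hsqrt).neg
    rw [neg_zero] at h
    exact h.congr fun t => by simp [hgdef, Function.comp]
  refine ⟨integrableOn_Ioi_deriv_of_nonneg' hg hpos hlim, ?_⟩
  have := integral_Ioi_of_hasDerivAt_of_nonneg' hg hpos hlim
  rw [this, hgdef]; ring
end Aux

open Set Filter Topology
open scoped ENNReal

set_option maxHeartbeats 1000000 in
/-- Maximal inequality for the second moment under Bernstein-type tails: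
there is a universal constant `K` such that for any random variables `X₁,…,X_k` with
`P(|X_i| ≥ x) ≤ 2 exp(−x²/(2(b + a x)))`,
`E(max_i |X_i|²) ≤ 4 K² (a log(1+k) + √b √(log(1+k)))²`. -/
theorem stmt_3 : ∃ K : ℝ, 0 < K ∧
    ∀ (k : ℕ), 0 < k → ∀ (Ω : Type) (_ : MeasurableSpace Ω) (μ : Measure Ω),
    IsProbabilityMeasure μ → ∀ (a b : ℝ), 0 < a → 0 < b →
    ∀ (X : Fin k → Ω → ℝ), (∀ i, Measurable (X i)) →
    (∀ i, ∀ x : ℝ, 0 < x →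
      μ {ω | x ≤ |X i ω|} ≤ ENNReal.ofReal (2 * Real.exp (-(x ^ 2) / (2 * (b + a * x))))) →
    ∫ ω, (⨆ i, |X i ω| ^ 2) ∂μ ≤
      4 * K ^ 2 * (a * Real.log (1 + k) + Real.sqrt b * Real.sqrt (Real.log (1 + k))) ^ 2 := by
  refine ⟨100, by norm_num, ?_⟩
  intro k hk Ω mΩ μ hμ a b ha hb X hX hT
  haveI : Nonempty (Fin k) := ⟨⟨0, hk⟩⟩
  set L := Real.log (1 + (k : ℝ)) with hLdef
  have hk1 : (1 : ℝ) ≤ (k : ℝ) := by exact_mod_cast hk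
  have h1k : (0 : ℝ) < 1 + (k : ℝ) := by linarith
  have hL2 : (1 : ℝ) / 2 ≤ L := by
    have h2 : Real.log 2 ≤ L := Real.log_le_log (by norm_num) (by linarith)
    have h3 := Real.log_two_gt_d9
    linarith
  have hLpos : 0 < L := by linarith
  set s := Real.sqrt b with hsdef
  set l := Real.sqrt L with hldef
  have hs : 0 < s := Real.sqrt_pos.mpr hb
  have hl : 0 < l := Real.sqrt_pos.mpr hLpos
  have hss : s ^ 2 = b := Real.sq_sqrt hb.le
  have hll : l ^ 2 = L := Real.sq_sqrt hLpos.le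
  set M := a * L + s * l with hMdef
  have hM : 0 < M := by positivity
  set u₀ := 4 * (a * L) + 2 * (s * l) with hu₀def
  have hu₀ : 0 < u₀ := by positivity
  set t₀ := u₀ ^ 2 with ht₀def
  have ht₀pos : 0 < t₀ := by positivity
  clear_value L s l M u₀ t₀
  set S : Ω → ℝ := fun ω => ⨆ i, |X i ω| ^ 2 with hSdef
  have hSmeas : Measurable S := Measurable.iSup fun i => ((hX i).abs.pow_const 2)
  have hS0 : ∀ ω, 0 ≤ S ω := by
    intro ω
    have hbdd : BddAbove (Set.range fun i => |X i ω| ^ 2) := (Set.finite_range _).bddAbove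
    exact le_trans (sq_nonneg (|X ⟨0, hk⟩ ω|)) (le_ciSup hbdd ⟨0, hk⟩)
  -- tail bound for the max
  have tail : ∀ t : ℝ, 0 < t → μ {ω | t < S ω} ≤
      ENNReal.ofReal ((k : ℝ) * (2 * Real.exp (-t / (2 * (b + a * Real.sqrt t))))) := by
    intro t ht
    have hsub : {ω | t < S ω} ⊆ ⋃ i, {ω | Real.sqrt t ≤ |X i ω|} := by
      intro ω hω
      have hbdd : BddAbove (Set.range fun i => |X i ω| ^ 2) := (Set.finite_range _).bddAbove
      obtain ⟨i, hi⟩ := (lt_ciSup_iff hbdd).mp hω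
      refine Set.mem_iUnion.mpr ⟨i, ?_⟩
      have h1 : Real.sqrt t ≤ Real.sqrt (|X i ω| ^ 2) := Real.sqrt_le_sqrt hi.le
      rwa [Real.sqrt_sq (abs_nonneg _)] at h1
    calc μ {ω | t < S ω} ≤ μ (⋃ i, {ω | Real.sqrt t ≤ |X i ω|}) := measure_mono hsub
      _ ≤ ∑' i, μ {ω | Real.sqrt t ≤ |X i ω|} := measure_iUnion_le _
      _ ≤ ∑' _ : Fin k, ENNReal.ofReal
          (2 * Real.exp (-(Real.sqrt t ^ 2) / (2 * (b + a * Real.sqrt t)))) :=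
        ENNReal.tsum_le_tsum fun i => hT i (Real.sqrt t) (Real.sqrt_pos.mpr ht)
      _ = (k : ℝ≥0∞) * ENNReal.ofReal (2 * Real.exp (-t / (2 * (b + a * Real.sqrt t)))) := by
        rw [Real.sq_sqrt ht.le, tsum_fintype]
        simp [Finset.sum_const, Finset.card_univ, nsmul_eq_mul]
      _ = ENNReal.ofReal ((k : ℝ) * (2 * Real.exp (-t / (2 * (b + a * Real.sqrt t))))) := by
        rw [ENNReal.ofReal_mul (by positivity : (0:ℝ) ≤ (k:ℝ))]
        rw [ENNReal.ofReal_natCast]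
  -- layer cake
  have layer : ∫⁻ ω, ENNReal.ofReal (S ω) ∂μ = ∫⁻ t in Ioi (0:ℝ), μ {ω | t < S ω} :=
    lintegral_eq_lintegral_meas_lt μ (Filter.Eventually.of_forall hS0) hSmeas.aemeasurable
  -- integrals of the dominating functions
  have hint_b := aux_exp_int (show (0:ℝ) < 4 * b by linarith) t₀
  have hint_a := aux_sqrt_int ha ht₀pos
  set G : ℝ → ℝ := fun t => 2 * (k:ℝ) *
    (Real.exp (-t / (4 * b)) + Real.exp (-Real.sqrt t / (4 * a))) with hGdef
  have hGint : IntegrableOn G (Ioi t₀) volume := (hint_b.1.add hint_a.1).const_mul _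
  have hG0 : ∀ t, 0 ≤ G t := fun t => by positivity
  -- pointwise domination on Ioi t₀
  have hpt : ∀ t ∈ Ioi t₀,
      (k : ℝ) * (2 * Real.exp (-t / (2 * (b + a * Real.sqrt t)))) ≤ G t := by
    intro t ht
    have htpos : 0 < t := lt_trans ht₀pos ht
    set st := Real.sqrt t with hstdef
    have hst : 0 < st := Real.sqrt_pos.mpr htpos
    have hst2 : st ^ 2 = t := Real.sq_sqrt htpos.le
    have hk0 : (0:ℝ) ≤ 2 * (k:ℝ) := by positivity
    rcases le_total b (a * st) with hc | hc
    · -- b ≤ a st : exponent ≥ st/(4a)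
      have hden : 0 < 2 * (b + a * st) := by positivity
      have hexp : st / (4 * a) ≤ t / (2 * (b + a * st)) := by
        rw [div_le_div_iff₀ (by positivity) hden]
        have h := mul_le_mul_of_nonneg_right hc hst.le
        nlinarith [hst2, h]
      have hEE : Real.exp (-t / (2 * (b + a * st))) ≤ Real.exp (-st / (4 * a)) := by
        apply Real.exp_le_exp.mpr
        rw [neg_div, neg_div]
        linarith
      have h2 : (k : ℝ) * (2 * Real.exp (-t / (2 * (b + a * st)))) ≤
          2 * (k:ℝ) * Real.exp (-st / (4 * a)) := by
        have := mul_le_mul_of_nonneg_left hEE hk0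
        linarith
      refine le_trans h2 ?_
      have h3 : (0:ℝ) ≤ 2 * (k:ℝ) * Real.exp (-t / (4 * b)) := by positivity
      rw [hGdef]
      linarith
    · -- a st ≤ b : exponent ≥ t/(4b)
      have hden : 0 < 2 * (b + a * st) := by positivity
      have hexp : t / (4 * b) ≤ t / (2 * (b + a * st)) := by
        apply div_le_div_of_nonneg_left htpos.le hden
        nlinarith
      have hEE : Real.exp (-t / (2 * (b + a * st))) ≤ Real.exp (-t / (4 * b)) := by
        apply Real.exp_le_exp.mpr
        rw [neg_div, neg_div]
        linarith
      have h2 : (k : ℝ) * (2 * Real.exp (-t / (2 * (b + a * st)))) ≤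
          2 * (k:ℝ) * Real.exp (-t / (4 * b)) := by
        have := mul_le_mul_of_nonneg_left hEE hk0
        linarith
      refine le_trans h2 ?_
      have h3 : (0:ℝ) ≤ 2 * (k:ℝ) * Real.exp (-st / (4 * a)) := by positivity
      rw [hGdef]
      linarith
  -- bound the lintegral
  set C2 : ℝ := 2 * (4 * b + (8 * a * u₀ + 32 * a ^ 2)) with hC2def
  have hC2nn : 0 ≤ C2 := by positivity
  have hintG : ∫ t in Ioi t₀, G t = 2 * (k:ℝ) *
      (4 * b * Real.exp (-t₀ / (4 * b)) +
        (8 * a * Real.sqrt t₀ + 32 * a ^ 2) * Real.exp (-Real.sqrt t₀ / (4 * a))) := by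
    simp only [hGdef]
    rw [integral_const_mul]
    rw [MeasureTheory.integral_add hint_b.1 hint_a.1, hint_b.2, hint_a.2]
  have hsqrt_t₀ : Real.sqrt t₀ = u₀ := by rw [ht₀def, Real.sqrt_sq hu₀.le]
  have hexpL : Real.exp (-L) = (1 + (k:ℝ))⁻¹ := by
    rw [Real.exp_neg, hLdef, Real.exp_log h1k]
  have hkexp : (k : ℝ) * Real.exp (-L) ≤ 1 := by
    rw [hexpL]
    rw [← div_eq_mul_inv, div_le_one h1k]
    linarith
  have hEb : Real.exp (-t₀ / (4 * b)) ≤ Real.exp (-L) := by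
    apply Real.exp_le_exp.mpr
    rw [neg_div]
    have h4bL : 4 * b * L ≤ t₀ := by
      rw [ht₀def, hu₀def, ← hss, ← hll]
      nlinarith [sq_nonneg (a * l ^ 2), mul_nonneg (mul_nonneg ha.le (sq_nonneg l))
        (mul_nonneg hs.le hl.le)]
    have : L ≤ t₀ / (4 * b) := by rw [le_div_iff₀ (by positivity)]; linarith
    linarith
  have hEa : Real.exp (-u₀ / (4 * a)) ≤ Real.exp (-L) := by
    apply Real.exp_le_exp.mpr
    rw [neg_div]
    have : L ≤ u₀ / (4 * a) := by
      rw [le_div_iff₀ (by positivity)]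
      rw [hu₀def]
      nlinarith [mul_pos hs hl]
    linarith
  have hintG_le : ∫ t in Ioi t₀, G t ≤ C2 := by
    rw [hintG, hsqrt_t₀, hC2def]
    have hP : (0:ℝ) ≤ 8 * a * u₀ + 32 * a ^ 2 := by positivity
    have hk4b : (k:ℝ) * (4 * b * Real.exp (-t₀ / (4 * b))) ≤ 4 * b := by
      have c1 : (k:ℝ) * (4 * b * Real.exp (-t₀ / (4 * b))) ≤
          (k:ℝ) * (4 * b * Real.exp (-L)) := by
        refine mul_le_mul_of_nonneg_left ?_ (by positivity : (0:ℝ) ≤ (k:ℝ))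
        exact mul_le_mul_of_nonneg_left hEb (by positivity)
      have c3 : 4 * b * ((k:ℝ) * Real.exp (-L)) ≤ 4 * b * 1 :=
        mul_le_mul_of_nonneg_left hkexp (by positivity)
      nlinarith
    have hkP : (k:ℝ) * ((8 * a * u₀ + 32 * a ^ 2) * Real.exp (-u₀ / (4 * a))) ≤
        8 * a * u₀ + 32 * a ^ 2 := by
      have c1 : (k:ℝ) * ((8 * a * u₀ + 32 * a ^ 2) * Real.exp (-u₀ / (4 * a))) ≤
          (k:ℝ) * ((8 * a * u₀ + 32 * a ^ 2) * Real.exp (-L)) := by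
        refine mul_le_mul_of_nonneg_left ?_ (by positivity : (0:ℝ) ≤ (k:ℝ))
        exact mul_le_mul_of_nonneg_left hEa hP
      have c3 : (8 * a * u₀ + 32 * a ^ 2) * ((k:ℝ) * Real.exp (-L)) ≤
          (8 * a * u₀ + 32 * a ^ 2) * 1 := mul_le_mul_of_nonneg_left hkexp hP
      nlinarith
    nlinarith [hk4b, hkP]
  have key : ∫⁻ ω, ENNReal.ofReal (S ω) ∂μ ≤ ENNReal.ofReal (t₀ + C2) := by
    rw [layer]
    rw [show Ioi (0:ℝ) = Ioc 0 t₀ ∪ Ioi t₀ from (Ioc_union_Ioi_eq_Ioi ht₀pos.le).symm]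
    rw [lintegral_union measurableSet_Ioi Ioc_disjoint_Ioi_same]
    rw [ENNReal.ofReal_add ht₀pos.le hC2nn]
    gcongr
    · -- first part ≤ ofReal t₀
      calc ∫⁻ t in Ioc (0:ℝ) t₀, μ {ω | t < S ω}
          ≤ ∫⁻ _ in Ioc (0:ℝ) t₀, 1 := lintegral_mono fun t => prob_le_one
        _ = volume (Ioc (0:ℝ) t₀) := setLIntegral_one _
        _ = ENNReal.ofReal t₀ := by rw [Real.volume_Ioc, sub_zero]
    · -- second part
      calc ∫⁻ t in Ioi t₀, μ {ω | t < S ω}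
          ≤ ∫⁻ t in Ioi t₀, ENNReal.ofReal (G t) := by
            apply setLIntegral_mono' measurableSet_Ioi
            intro t ht
            exact le_trans (tail t (lt_trans ht₀pos ht)) (ENNReal.ofReal_le_ofReal (hpt t ht))
        _ = ENNReal.ofReal (∫ t in Ioi t₀, G t) :=
            (ofReal_integral_eq_lintegral_ofReal hGint
              (Filter.Eventually.of_forall fun t => hG0 t)).symm
        _ ≤ ENNReal.ofReal C2 := ENNReal.ofReal_le_ofReal hintG_le
  -- go back to the Bochner integral
  rw [integral_eq_lintegral_of_nonneg_ae (Filter.Eventually.of_forall hS0)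
    hSmeas.aestronglyMeasurable]
  have hfinal : t₀ + C2 ≤ 4 * (100:ℝ) ^ 2 * M ^ 2 := by
    have hsl : 0 ≤ s * l := by positivity
    have haL : 0 ≤ a * L := by positivity
    have ha2 : a ≤ 2 * M := by
      rw [hMdef]
      nlinarith [mul_le_mul_of_nonneg_left hL2 ha.le]
    have hslM : s * l ≤ M := by rw [hMdef]; linarith
    have hb2 : b ≤ 2 * M ^ 2 := by
      have d1 : (s * l) ^ 2 ≤ M ^ 2 := pow_le_pow_left₀ hsl hslM 2
      have d3 := mul_le_mul_of_nonneg_left hL2 (sq_nonneg s)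
      have d4 : s ^ 2 * L = (s * l) ^ 2 := by rw [← hll]; ring
      nlinarith
    have hu4 : u₀ ≤ 4 * M := by rw [hu₀def, hMdef]; linarith
    have h1 : u₀ ^ 2 ≤ 16 * M ^ 2 := by
      calc u₀ ^ 2 ≤ (4 * M) ^ 2 := pow_le_pow_left₀ hu₀.le hu4 2
        _ = 16 * M ^ 2 := by ring
    have h2 : a * u₀ ≤ 8 * M ^ 2 := by
      calc a * u₀ ≤ (2 * M) * (4 * M) :=
            mul_le_mul ha2 hu4 hu₀.le (by positivity : (0:ℝ) ≤ 2 * M)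
        _ = 8 * M ^ 2 := by ring
    have h3 : a ^ 2 ≤ 4 * M ^ 2 := by
      calc a ^ 2 ≤ (2 * M) ^ 2 := pow_le_pow_left₀ ha.le ha2 2
        _ = 4 * M ^ 2 := by ring
    rw [ht₀def, hC2def]
    linarith [sq_nonneg M]
  calc (∫⁻ ω, ENNReal.ofReal (S ω) ∂μ).toReal
      ≤ t₀ + C2 := ENNReal.toReal_le_of_le_ofReal (by positivity) key
    _ ≤ 4 * (100:ℝ) ^ 2 * M ^ 2 := hfinal
end

section
/- Let X₁, …, X_k be real random variables such that for all x > 0 and each i, P(|X_i| ≥ x) ≤ 2 exp(−x²/(2(b+ax))) for fixed a, b > 0. Then there exists a universal constant K with E(max_{1≤i≤k} |X_i|) ≤ K (a log(1+k) + √b √(log(1+k))). -/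
open MeasureTheory Set Real ENNReal

lemma expLint {c C T : ℝ} (hc : 0 < c) (hC : 0 ≤ C) :
    ∫⁻ t in Set.Ioi T, ENNReal.ofReal (C * Real.exp (-(c * t))) =
      ENNReal.ofReal (C * (c⁻¹ * Real.exp (-(c * T)))) := by
  rw [← ofReal_integral_eq_lintegral_ofReal]
  · congr 1
    rw [integral_const_mul]
    have h1 : (∫ t in Set.Ioi T, Real.exp (-(c * t)))
        = (∫ t in Set.Ioi T, (fun x => Real.exp (-x)) (t * c)) := by
      congr 1; ext t; rw [mul_comm]
    rw [h1, integral_comp_mul_right_Ioi (fun x => Real.exp (-x)) T hc,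
      integral_exp_neg_Ioi, smul_eq_mul, mul_comm T c]
  · have := (exp_neg_integrableOn_Ioi T hc).const_mul C
    simpa [neg_mul] using this
  · filter_upwards with t
    positivity

set_option maxHeartbeats 1000000 in
/-- Maximal inequality for the first moment under Bernstein-type tails:
there is a universal constant `K` such that for any random variables `X₁,…,X_k` with
`P(|X_i| ≥ x) ≤ 2 exp(−x²/(2(b + a x)))`,
`E(max_i |X_i|) ≤ K (a log(1+k) + √b √(log(1+k)))`. -/
theorem stmt_4 : ∃ K : ℝ, 0 < K ∧
    ∀ (k : ℕ), 0 < k → ∀ (Ω : Type) (_ : MeasurableSpace Ω) (μ : Measure Ω),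
    IsProbabilityMeasure μ → ∀ (a b : ℝ), 0 < a → 0 < b →
    ∀ (X : Fin k → Ω → ℝ), (∀ i, Measurable (X i)) →
    (∀ i, ∀ x : ℝ, 0 < x →
      μ {ω | x ≤ |X i ω|} ≤ ENNReal.ofReal (2 * Real.exp (-(x ^ 2) / (2 * (b + a * x))))) →
    ∫ ω, (⨆ i, |X i ω|) ∂μ ≤
      K * (a * Real.log (1 + k) + Real.sqrt b * Real.sqrt (Real.log (1 + k))) := by
  refine ⟨100, by norm_num, ?_⟩
  intro k hk Ω mΩ μ hμ a b ha hb X hX hTail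
  haveI : Nonempty (Fin k) := ⟨⟨0, hk⟩⟩
  haveI : Inhabited (Fin k) := ⟨⟨0, hk⟩⟩
  set L := Real.log (1 + k) with hLdef
  have hk1 : (1:ℝ) ≤ k := by exact_mod_cast hk
  have h1k : (2:ℝ) ≤ 1 + k := by linarith
  have hL2 : (1:ℝ)/2 ≤ L := by
    have h1 : (1:ℝ)/2 < Real.log 2 := by
      have := Real.log_two_gt_d9; linarith
    have h2 : Real.log 2 ≤ L := Real.log_le_log (by norm_num) h1k
    linarith
  have hLpos : 0 < L := by linarith
  have hsL : Real.sqrt L * Real.sqrt L = L := Real.mul_self_sqrt hLpos.le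
  have hsLpos : 0 < Real.sqrt L := Real.sqrt_pos.mpr hLpos
  have hsb : Real.sqrt b * Real.sqrt b = b := Real.mul_self_sqrt hb.le
  have hsbpos : 0 < Real.sqrt b := Real.sqrt_pos.mpr hb
  set M : Ω → ℝ := fun ω => ⨆ i, |X i ω| with hMdef
  have hMnn : ∀ ω, 0 ≤ M ω := fun ω =>
    (abs_nonneg (X default ω)).trans
      (le_ciSup (Set.finite_range fun i => |X i ω|).bddAbove default)
  have hMmeas : Measurable M := by
    have h : M = fun ω => Finset.univ.sup' Finset.univ_nonempty (fun i => |X i ω|) := by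
      funext ω; rw [Finset.sup'_univ_eq_ciSup]
    rw [h]
    have := Finset.measurable_sup' (Finset.univ_nonempty (α := Fin k))
      (f := fun i => fun ω => |X i ω|) (fun i _ => (hX i).abs)
    convert this using 1
    funext ω
    simp [Finset.sup'_apply]
  -- pass to lintegral
  have hInt : ∫ ω, (⨆ i, |X i ω|) ∂μ = (∫⁻ ω, ENNReal.ofReal (M ω) ∂μ).toReal :=
    integral_eq_lintegral_of_nonneg_ae (Filter.Eventually.of_forall hMnn)
      hMmeas.aestronglyMeasurable
  have hlayer : ∫⁻ ω, ENNReal.ofReal (M ω) ∂μ = ∫⁻ t in Set.Ioi (0:ℝ), μ {ω | t < M ω} :=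
    lintegral_eq_lintegral_meas_lt μ (Filter.Eventually.of_forall hMnn) hMmeas.aemeasurable
  -- tail bound
  have hTail2 : ∀ t : ℝ, 0 < t → μ {ω | t < M ω} ≤
      ENNReal.ofReal (2 * k * Real.exp (-(t / (4 * a))))
        + ENNReal.ofReal (2 * k * Real.exp (-(t ^ 2 / (4 * b)))) := by
    intro t ht
    have hsub : {ω | t < M ω} ⊆ ⋃ i, {ω | t ≤ |X i ω|} := by
      intro ω hω
      obtain ⟨i, hi⟩ := (lt_ciSup_iff (Set.finite_range fun i => |X i ω|).bddAbove).mp hω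
      exact Set.mem_iUnion.mpr ⟨i, hi.le⟩
    have hexp : Real.exp (-(t ^ 2) / (2 * (b + a * t))) ≤
        Real.exp (-(t / (4 * a))) + Real.exp (-(t ^ 2 / (4 * b))) := by
      have hden : 0 < b + a * t := by positivity
      rcases le_total (a * t) b with h | h
      · have h1 : -(t ^ 2) / (2 * (b + a * t)) ≤ -(t ^ 2 / (4 * b)) := by
          rw [neg_div, neg_le_neg_iff]
          apply div_le_div_of_nonneg_left (by positivity) (by positivity)
          linarith
        have := Real.exp_le_exp.mpr h1
        have h2 : (0:ℝ) < Real.exp (-(t / (4 * a))) := Real.exp_pos _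
        linarith
      · have h1 : -(t ^ 2) / (2 * (b + a * t)) ≤ -(t / (4 * a)) := by
          rw [neg_div, neg_le_neg_iff]
          have h4 : t ^ 2 / (2 * (b + a * t)) ≥ t ^ 2 / (4 * (a * t)) := by
            apply div_le_div_of_nonneg_left (by positivity) (by positivity)
            linarith
          have h5 : t ^ 2 / (4 * (a * t)) = t / (4 * a) := by
            field_simp
          linarith
        have := Real.exp_le_exp.mpr h1
        have h2 : (0:ℝ) < Real.exp (-(t ^ 2 / (4 * b))) := Real.exp_pos _
        linarith
    calc μ {ω | t < M ω} ≤ ∑ i, μ {ω | t ≤ |X i ω|} :=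
          (measure_mono hsub).trans (measure_iUnion_fintype_le μ _)
      _ ≤ ∑ _i : Fin k, ENNReal.ofReal (2 * Real.exp (-(t ^ 2) / (2 * (b + a * t)))) :=
          Finset.sum_le_sum fun i _ => hTail i t ht
      _ = (k : ℝ≥0∞) * ENNReal.ofReal (2 * Real.exp (-(t ^ 2) / (2 * (b + a * t)))) := by
          simp [Finset.sum_const, Finset.card_univ, mul_comm]
      _ ≤ ENNReal.ofReal (2 * k * Real.exp (-(t / (4 * a))))
        + ENNReal.ofReal (2 * k * Real.exp (-(t ^ 2 / (4 * b)))) := by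
          rw [← ENNReal.ofReal_natCast k, ← ENNReal.ofReal_mul (by positivity),
            ← ENNReal.ofReal_add (by positivity) (by positivity)]
          apply ENNReal.ofReal_le_ofReal
          have hk0 : (0:ℝ) ≤ k := by positivity
          nlinarith [hexp]
  -- split the integral
  set Ta : ℝ := 8 * a * L with hTa
  set Tb : ℝ := 4 * Real.sqrt b * Real.sqrt L with hTb
  set T : ℝ := Ta + Tb with hT
  have hTapos : 0 < Ta := by positivity
  have hTbpos : 0 < Tb := by positivity
  have hTpos : 0 < T := by positivity
  set c2 : ℝ := Real.sqrt L / Real.sqrt b with hc2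
  have hc2pos : 0 < c2 := by positivity
  -- part 1 : Ioc 0 T
  have hpart1 : ∫⁻ t in Set.Ioc (0:ℝ) T, μ {ω | t < M ω} ≤ ENNReal.ofReal T := by
    calc ∫⁻ t in Set.Ioc (0:ℝ) T, μ {ω | t < M ω}
        ≤ ∫⁻ _t in Set.Ioc (0:ℝ) T, 1 :=
          setLIntegral_mono measurable_const (fun t _ => prob_le_one)
      _ = ENNReal.ofReal T := by
          rw [setLIntegral_const, one_mul, Real.volume_Ioc, sub_zero]
  -- part 2 : Ioi T
  have hg1meas : Measurable fun t : ℝ => ENNReal.ofReal (2 * k * Real.exp (-(t / (4 * a))))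
      + ENNReal.ofReal (2 * k * Real.exp (-(t ^ 2 / (4 * b)))) := by
    fun_prop
  have hpart2 : ∫⁻ t in Set.Ioi T, μ {ω | t < M ω} ≤
      ENNReal.ofReal (2 * k * (4 * a) * Real.exp (-(T / (4 * a))))
        + ENNReal.ofReal (2 * k * c2⁻¹ * Real.exp (-(c2 * T))) := by
    have step1 : ∫⁻ t in Set.Ioi T, μ {ω | t < M ω} ≤
        ∫⁻ t in Set.Ioi T, (ENNReal.ofReal (2 * k * Real.exp (-(t / (4 * a))))
          + ENNReal.ofReal (2 * k * Real.exp (-(c2 * t)))) := by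
      apply setLIntegral_mono (by fun_prop)
      intro t ht
      have htT : T < t := ht
      have ht0 : 0 < t := hTpos.trans htT
      refine (hTail2 t ht0).trans (add_le_add le_rfl ?_)
      apply ENNReal.ofReal_le_ofReal
      have hbound : c2 * t ≤ t ^ 2 / (4 * b) := by
        rw [le_div_iff₀ (by positivity)]
        have h1 : Tb ≤ t := by linarith
        have h2 : c2 * (4 * b) = Tb := by
          have h4b : (4:ℝ) * b = 4 * (Real.sqrt b * Real.sqrt b) := by rw [hsb]
          rw [hc2, hTb, h4b]
          field_simp
        calc c2 * t * (4 * b) = (c2 * (4 * b)) * t := by ring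
          _ = Tb * t := by rw [h2]
          _ ≤ t * t := mul_le_mul_of_nonneg_right h1 ht0.le
          _ = t ^ 2 := by ring
      have hee := Real.exp_le_exp.mpr (neg_le_neg hbound)
      have hk0 : (0:ℝ) ≤ 2 * k := by positivity
      exact mul_le_mul_of_nonneg_left hee hk0
    refine step1.trans ?_
    rw [lintegral_add_left (by fun_prop)]
    apply add_le_add
    · have heq : ∀ t : ℝ, (2 * (k:ℝ) * Real.exp (-(t / (4 * a))))
          = 2 * k * Real.exp (-((4 * a)⁻¹ * t)) := by
        intro t; rw [inv_mul_eq_div]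
      simp only [heq]
      rw [expLint (by positivity) (by positivity)]
      apply ENNReal.ofReal_le_ofReal
      rw [inv_inv, inv_mul_eq_div]
      exact le_of_eq (by ring)
    · rw [expLint hc2pos (by positivity)]
      exact ENNReal.ofReal_le_ofReal (le_of_eq (by ring))
  -- combine the two parts
  have hsplitSet : Set.Ioi (0:ℝ) = Set.Ioc 0 T ∪ Set.Ioi T :=
    (Set.Ioc_union_Ioi_eq_Ioi hTpos.le).symm
  have htotal : ∫⁻ t in Set.Ioi (0:ℝ), μ {ω | t < M ω} ≤
      ENNReal.ofReal T + (ENNReal.ofReal (2 * k * (4 * a) * Real.exp (-(T / (4 * a))))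
        + ENNReal.ofReal (2 * k * c2⁻¹ * Real.exp (-(c2 * T)))) := by
    rw [hsplitSet]
    exact (lintegral_union_le _ _ _).trans (add_le_add hpart1 hpart2)
  -- real-number estimates
  set V2 : ℝ := 2 * k * (4 * a) * Real.exp (-(T / (4 * a))) with hV2
  set V3 : ℝ := 2 * k * c2⁻¹ * Real.exp (-(c2 * T)) with hV3
  have hexpL : Real.exp (-L) = (1 + (k:ℝ))⁻¹ := by
    rw [Real.exp_neg, Real.exp_log (by linarith)]
  have h3 : (k:ℝ) * (1 + (k:ℝ))⁻¹ ≤ 1 := by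
    rw [← div_eq_mul_inv, div_le_one (by linarith)]
    linarith
  have hV2le : V2 ≤ 16 * a * L := by
    have h1 : L ≤ T / (4 * a) := by
      rw [le_div_iff₀ (by positivity)]
      nlinarith [hTbpos]
    have h2 : Real.exp (-(T / (4 * a))) ≤ (1 + (k:ℝ))⁻¹ := by
      rw [← hexpL]
      exact Real.exp_le_exp.mpr (by linarith)
    have hkpos : (0:ℝ) ≤ (k:ℝ) := by positivity
    calc V2 = 8 * a * ((k:ℝ) * Real.exp (-(T / (4 * a)))) := by rw [hV2]; ring
      _ ≤ 8 * a * ((k:ℝ) * (1 + (k:ℝ))⁻¹) := by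
          apply mul_le_mul_of_nonneg_left _ (by positivity)
          exact mul_le_mul_of_nonneg_left h2 hkpos
      _ ≤ 8 * a * 1 := mul_le_mul_of_nonneg_left h3 (by positivity)
      _ ≤ 8 * a * (2 * L) := mul_le_mul_of_nonneg_left (by linarith) (by positivity)
      _ = 16 * a * L := by ring
  have hV3le : V3 ≤ 8 * Real.sqrt b * Real.sqrt L := by
    have hc2Tb : c2 * Tb = 4 * L := by
      rw [hc2, hTb]
      field_simp
      linear_combination hsL
    have hexpand : c2 * T = c2 * Ta + 4 * L := by rw [hT, mul_add, hc2Tb]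
    have h1 : L ≤ c2 * T := by linarith [mul_pos hc2pos hTapos]
    have h2 : Real.exp (-(c2 * T)) ≤ (1 + (k:ℝ))⁻¹ := by
      rw [← hexpL]
      exact Real.exp_le_exp.mpr (by linarith)
    have hkpos : (0:ℝ) ≤ (k:ℝ) := by positivity
    have hc2inv : c2⁻¹ = Real.sqrt b / Real.sqrt L := by rw [hc2, inv_div]
    have hfin : Real.sqrt b / Real.sqrt L ≤ 4 * (Real.sqrt b * Real.sqrt L) := by
      rw [div_le_iff₀ hsLpos]
      calc Real.sqrt b = Real.sqrt b * 1 := by ring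
        _ ≤ Real.sqrt b * (4 * L) := mul_le_mul_of_nonneg_left (by linarith) hsbpos.le
        _ = 4 * (Real.sqrt b * (Real.sqrt L * Real.sqrt L)) := by rw [hsL]; ring
        _ = 4 * (Real.sqrt b * Real.sqrt L) * Real.sqrt L := by ring
    calc V3 = 2 * (Real.sqrt b / Real.sqrt L) * ((k:ℝ) * Real.exp (-(c2 * T))) := by
          rw [hV3, hc2inv]; ring
      _ ≤ 2 * (Real.sqrt b / Real.sqrt L) * ((k:ℝ) * (1 + (k:ℝ))⁻¹) := by
          apply mul_le_mul_of_nonneg_left _ (by positivity)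
          exact mul_le_mul_of_nonneg_left h2 hkpos
      _ ≤ 2 * (Real.sqrt b / Real.sqrt L) * 1 := mul_le_mul_of_nonneg_left h3 (by positivity)
      _ ≤ 2 * (4 * (Real.sqrt b * Real.sqrt L)) * 1 := by
          have h9 := mul_le_mul_of_nonneg_left hfin (by norm_num : (0:ℝ) ≤ 2)
          linarith [h9]
      _ = 8 * Real.sqrt b * Real.sqrt L := by ring
  -- conclude
  rw [hInt, hlayer]
  have hRnn : (0:ℝ) ≤ 100 * (a * L + Real.sqrt b * Real.sqrt L) := by positivity
  refine ENNReal.toReal_le_of_le_ofReal hRnn (htotal.trans ?_)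
  rw [← ENNReal.ofReal_add (by positivity) (by positivity),
    ← ENNReal.ofReal_add hTpos.le (by positivity)]
  apply ENNReal.ofReal_le_ofReal
  have haL : (0:ℝ) ≤ a * L := by positivity
  have hbL : (0:ℝ) ≤ Real.sqrt b * Real.sqrt L := by positivity
  have hTval : T = 8 * a * L + 4 * Real.sqrt b * Real.sqrt L := by rw [hT, hTa, hTb]
  linarith [hV2le, hV3le]
end

section
/- Let 1 ≤ s ≤ k/8. There exists a subset {ω^(1), …, ω^(M)} of the s-sparse binary vectors Ω = {ω ∈ {0,1}^k : ‖ω‖₀ = s} such that ‖ω^(j) − ω^(j')‖₀ ≥ s/2 for all j ≠ j', and log M ≥ (s/8) log(1 + k/(2s)). -/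
open Finset

lemma cube_le_three_pow (s : ℕ) : s^3 ≤ 3^s := by
  induction s with
  | zero => norm_num
  | succ n ih =>
    rcases lt_or_ge n 3 with h | h
    · interval_cases n <;> norm_num
    · calc (n+1)^3 ≤ 3 * n^3 := by nlinarith [Nat.mul_le_mul_right (n^2) h, Nat.mul_le_mul_right n h, h]
        _ ≤ 3 * 3^n := by omega
        _ = 3^(n+1) := by ring

lemma choose_step {n s i : ℕ} (h2 : 2*s ≤ n) (hi : i + 1 ≤ s) :
    (n - s) * n.choose i ≤ s * n.choose (i+1) := by
  have key : (n - s) * (i+1) ≤ s * (n - i) := by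
    zify [(by omega : s ≤ n), (by omega : i ≤ n)]
    nlinarith [hi, h2]
  have hid := Nat.choose_succ_right_eq n i
  have H : (n - s) * n.choose i * (i+1) ≤ s * n.choose (i+1) * (i+1) := by
    calc (n - s) * n.choose i * (i+1) = (n - s) * (i+1) * n.choose i := by ring
      _ ≤ s * (n - i) * n.choose i := Nat.mul_le_mul_right _ key
      _ = s * (n.choose i * (n - i)) := by ring
      _ = s * (n.choose (i+1) * (i+1)) := by rw [hid]
      _ = s * n.choose (i+1) * (i+1) := by ring
  exact Nat.le_of_mul_le_mul_right H (by omega)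

lemma choose_ratio {n s : ℕ} (h2 : 2*s ≤ n) :
    ∀ d j, j + d ≤ s → (n - s)^d * n.choose j ≤ s^d * n.choose (j + d) := by
  intro d
  induction d with
  | zero => intro j _; simp
  | succ d ih =>
    intro j hj
    have h1 : (n - s) * n.choose j ≤ s * n.choose (j+1) := choose_step h2 (by omega)
    calc (n-s)^(d+1) * n.choose j = (n-s)^d * ((n-s) * n.choose j) := by ring
      _ ≤ (n-s)^d * (s * n.choose (j+1)) := Nat.mul_le_mul_left _ h1
      _ = s * ((n-s)^d * n.choose (j+1)) := by ring
      _ ≤ s * (s^d * n.choose (j+1+d)) := Nat.mul_le_mul_left _ (ih (j+1) (by omega))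
      _ = s^(d+1) * n.choose (j+(d+1)) := by rw [show j+1+d = j+(d+1) by omega]; ring

lemma choose_mono_half {n j m : ℕ} (hj : j ≤ m) (hm : 2*m ≤ n) :
    n.choose j ≤ n.choose m := by
  induction m with
  | zero => simp_all
  | succ m ih =>
    rcases Nat.lt_or_ge j (m+1) with h | h
    · exact (ih (by omega) (by omega)).trans
        (Nat.choose_le_succ_of_lt_half_left (by omega))
    · have : j = m + 1 := by omega
      simp [this]

lemma exists_maximal_code {α : Type*} [DecidableEq α] (Ω : Finset α) (r : α → α → Prop)
    [DecidableRel r] (hsymm : ∀ a b, r a b → r b a) :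
    ∃ T, T ⊆ Ω ∧ (∀ a ∈ T, ∀ b ∈ T, a ≠ b → r a b) ∧
      (∀ a ∈ Ω, ∃ b ∈ T, a = b ∨ ¬ r a b) := by

  obtain ⟨T, hTS, hmax⟩ := exists_max_image
    (Ω.powerset.filter (fun t => ∀ a ∈ t, ∀ b ∈ t, a ≠ b → r a b)) card
    ⟨∅, by simp⟩
  rw [mem_filter, mem_powerset] at hTS
  refine ⟨T, hTS.1, hTS.2, ?_⟩
  intro a ha
  by_contra hcon
  push_neg at hcon
  have haT : a ∉ T := fun h => by
    have := hcon a h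
    simp at this
  have hgood : insert a T ∈
      Ω.powerset.filter (fun t => ∀ a ∈ t, ∀ b ∈ t, a ≠ b → r a b) := by
    rw [mem_filter, mem_powerset]
    refine ⟨insert_subset ha hTS.1, ?_⟩
    intro x hx y hy hxy
    rcases mem_insert.1 hx with hx1 | hx2
    · rcases mem_insert.1 hy with hy1 | hy2
      · exact absurd (hx1.trans hy1.symm) hxy
      · exact hx1 ▸ (hcon y hy2).2
    · rcases mem_insert.1 hy with hy1 | hy2
      · exact hy1 ▸ hsymm _ _ (hcon x hx2).2
      · exact hTS.2 x hx2 y hy2 hxy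
  have := hmax _ hgood
  rw [card_insert_of_notMem haT] at this
  omega

lemma ball_card_le {k s m : ℕ} (hs : 1 ≤ s) (hk : 8*s ≤ k)
    (hm : ∀ j, 4*j < s → j ≤ m) (hms : 2*m ≤ k - s)
    (B : Finset (Fin k)) (hB : B.card = s) :
    ((powersetCard s (univ : Finset (Fin k))).filter
      (fun A => A = B ∨ ¬ (s ≤ 2*((symmDiff A B).card)))).card
      ≤ 2^s * ((m+1) * (k-s).choose m) := by
  classical
  have hmain : ((powersetCard s (univ : Finset (Fin k))).filter
      (fun A => A = B ∨ ¬ (s ≤ 2*((symmDiff A B).card)))).card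
      ≤ (B.powerset ×ˢ ((Bᶜ).powerset.filter (fun X => X.card ≤ m))).card := by
    apply card_le_card_of_injOn (fun A => (A ∩ B, A \ B))
    · intro A hA
      rw [mem_coe, mem_filter, mem_powersetCard] at hA
      obtain ⟨⟨-, hAcard⟩, hcond⟩ := hA
      have hd : (symmDiff A B).card = (A \ B).card + (B \ A).card := by
        rw [symmDiff_def]
        exact card_union_of_disjoint disjoint_sdiff_sdiff
      have heq : (A \ B).card = (B \ A).card := by
        have h1 := card_sdiff_add_card_inter A B
        have h2 := card_sdiff_add_card_inter B A
        rw [inter_comm] at h2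
        omega
      have hsmall : 2 * (symmDiff A B).card < s := by
        rcases hcond with rfl | hlt
        · simp only [symmDiff_self, bot_eq_empty, card_empty]; omega
        · omega
      have hj : (A \ B).card ≤ m := hm _ (by omega)
      rw [mem_coe, mem_product, mem_powerset, mem_filter, mem_powerset]
      exact ⟨inter_subset_right, ⟨fun x hx => by
        simp only [mem_compl]
        exact (mem_sdiff.1 hx).2, hj⟩⟩
    · intro A1 h1 A2 h2 heq
      simp only [Prod.mk.injEq] at heq
      have e1 : A1 \ B ∪ A1 ∩ B = A1 := sdiff_union_inter A1 B
      have e2 : A2 \ B ∪ A2 ∩ B = A2 := sdiff_union_inter A2 B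
      rw [← e1, ← e2, heq.1, heq.2]
  have hcount : (B.powerset ×ˢ ((Bᶜ).powerset.filter (fun X => X.card ≤ m))).card
      ≤ 2^s * ((m+1) * (k-s).choose m) := by
    rw [card_product, card_powerset, hB]
    apply Nat.mul_le_mul_left
    have hsub : (Bᶜ).powerset.filter (fun X => X.card ≤ m) ⊆
        (range (m+1)).biUnion (fun j => powersetCard j Bᶜ) := by
      intro X hX
      rw [mem_filter, mem_powerset] at hX
      rw [mem_biUnion]
      exact ⟨X.card, mem_range.2 (by omega), mem_powersetCard.2 ⟨hX.1, rfl⟩⟩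
    have hBc : (Bᶜ).card = k - s := by
      rw [card_compl, hB]
      simp
    calc ((Bᶜ).powerset.filter (fun X => X.card ≤ m)).card
        ≤ ((range (m+1)).biUnion (fun j => powersetCard j Bᶜ)).card :=
          card_le_card hsub
      _ ≤ (range (m+1)).card * (k-s).choose m := by
          apply card_biUnion_le_card_mul
          intro j hj
          rw [card_powersetCard, hBc]
          exact choose_mono_half (by simpa using Nat.lt_succ_iff.1 (mem_range.1 hj)) hms
      _ = (m+1) * (k-s).choose m := by rw [card_range]
  exact hmain.trans hcount

lemma q_poly {q : ℝ} (hq : 6 ≤ q) : (q+4) * 2432 ≤ q^6 := by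
  have h5 : (6:ℝ)^5 ≤ q^5 := pow_le_pow_left₀ (by norm_num) hq 5
  calc (q+4) * 2432 ≤ 7776 * q := by nlinarith
    _ = 6^5 * q := by norm_num
    _ ≤ q^5 * q := by nlinarith
    _ = q^6 := by ring

lemma key_ineq {q : ℝ} (hq : 6 ≤ q) :
    (1/8) * Real.log ((q+4)/2) + Real.log 2 + Real.log 3 / 3 ≤ (3/4) * Real.log q := by
  have hq0 : (0:ℝ) < q := by linarith
  have l3 : (8/3) * Real.log 3 ≤ Real.log 19 := by
    have h1 : Real.log ((3:ℝ)^8) ≤ Real.log ((19:ℝ)^3) := by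
      apply Real.log_le_log (by positivity)
      norm_num
    rw [Real.log_pow, Real.log_pow] at h1
    push_cast at h1
    linarith
  have l1 : Real.log ((q+4) * 2432) ≤ Real.log (q^6) :=
    Real.log_le_log (by positivity) (q_poly hq)
  have l2 : Real.log ((q+4) * 2432) =
      Real.log ((q+4)/2) + 8 * Real.log 2 + Real.log 19 := by
    have : (q+4) * 2432 = ((q+4)/2) * 2^8 * 19 := by ring
    rw [this, Real.log_mul (by positivity) (by norm_num),
      Real.log_mul (by positivity) (by norm_num), Real.log_pow]
    push_cast
    ring
  have l4 : Real.log (q^6) = 6 * Real.log q := by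
    rw [Real.log_pow]; push_cast; ring
  linarith

lemma endgame {k s m N : ℕ} (hs : 1 ≤ s) (hk : 8*s ≤ k) (hm1 : 4*m+1 ≤ s)
    (H : (k - 2*s)^(s-m) ≤ s^(s-m) * N * 2^s * (m+1)) :
    (s:ℝ)/8 * Real.log (1 + (k:ℝ)/(2*(s:ℝ))) ≤ Real.log N := by
  have hms : m + 1 ≤ s := by omega
  have h2sk : 2*s ≤ k := by omega
  have hQpos : 0 < k - 2*s := by omega
  have hN : 1 ≤ N := by
    by_contra h
    have : N = 0 := by omega
    subst this
    simp at H
    have := Nat.pow_pos (n := s-m) hQpos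
    omega
  -- cast to ℝ
  have hS1 : (1:ℝ) ≤ (s:ℝ) := by exact_mod_cast hs
  have hS0 : (0:ℝ) < (s:ℝ) := by linarith
  have hK8 : 8*(s:ℝ) ≤ (k:ℝ) := by exact_mod_cast hk
  have hQcast : ((k - 2*s : ℕ) : ℝ) = (k:ℝ) - 2*(s:ℝ) := by
    push_cast [h2sk]; ring
  have hQR : (0:ℝ) < (k:ℝ) - 2*(s:ℝ) := by linarith
  set b := s - m with hb
  have hbpos : 1 ≤ b := by omega
  have HR : ((k:ℝ) - 2*(s:ℝ))^b ≤ (s:ℝ)^b * (N:ℝ) * 2^s * ((m:ℝ)+1) := by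
    rw [← hQcast]
    exact_mod_cast H
  have hN1 : (1:ℝ) ≤ (N:ℝ) := by exact_mod_cast hN
  have hM1 : (0:ℝ) < (m:ℝ) + 1 := by positivity
  -- take logs
  have hlog : Real.log (((k:ℝ) - 2*(s:ℝ))^b) ≤
      Real.log ((s:ℝ)^b * (N:ℝ) * 2^s * ((m:ℝ)+1)) :=
    Real.log_le_log (by positivity) HR
  rw [Real.log_pow] at hlog
  rw [Real.log_mul (by positivity) (by positivity),
    Real.log_mul (by positivity) (by positivity),
    Real.log_mul (by positivity) (by positivity),
    Real.log_pow, Real.log_pow] at hlog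
  -- abbreviations
  set q : ℝ := ((k:ℝ) - 2*(s:ℝ)) / (s:ℝ) with hqdef
  have hq6 : (6:ℝ) ≤ q := by
    rw [hqdef, le_div_iff₀ hS0]
    linarith
  have hq0 : (0:ℝ) < q := by linarith
  have hlogq : Real.log ((k:ℝ) - 2*(s:ℝ)) - Real.log (s:ℝ) = Real.log q := by
    rw [hqdef, Real.log_div (by linarith) (by linarith)]
  have hlogq0 : 0 ≤ Real.log q := Real.log_nonneg (by linarith)
  have hbcast : ((b:ℕ):ℝ) = (s:ℝ) - (m:ℝ) := by
    have hms' : m ≤ s := by omega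
    rw [hb, Nat.cast_sub hms']
  have hb34 : 3*(s:ℝ)/4 ≤ ((b:ℕ):ℝ) := by
    rw [hbcast]
    have : 4*(m:ℝ) + 1 ≤ (s:ℝ) := by exact_mod_cast hm1
    linarith
  have hlogm : Real.log ((m:ℝ)+1) ≤ Real.log (s:ℝ) := by
    apply Real.log_le_log hM1
    exact_mod_cast hms
  have hlogN : 3*(s:ℝ)/4 * Real.log q - (s:ℝ) * Real.log 2 - Real.log (s:ℝ)
      ≤ Real.log (N:ℝ) := by
    have h1 : ((b:ℕ):ℝ) * Real.log q ≤
        Real.log (N:ℝ) + (s:ℝ) * Real.log 2 + Real.log ((m:ℝ)+1) := by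
      have e : ((b:ℕ):ℝ) * Real.log q =
          ((b:ℕ):ℝ) * Real.log ((k:ℝ) - 2*(s:ℝ)) - ((b:ℕ):ℝ) * Real.log (s:ℝ) := by
        rw [← hlogq]; ring
      rw [e]; linarith
    have h2 : 3*(s:ℝ)/4 * Real.log q ≤ ((b:ℕ):ℝ) * Real.log q :=
      mul_le_mul_of_nonneg_right hb34 hlogq0
    linarith
  -- bound log s
  have hlogS : Real.log (s:ℝ) ≤ (s:ℝ) * Real.log 3 / 3 := by
    have h1 : ((s:ℝ))^3 ≤ (3:ℝ)^s := by exact_mod_cast cube_le_three_pow s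
    have h2 : Real.log (((s:ℝ))^3) ≤ Real.log ((3:ℝ)^s) :=
      Real.log_le_log (by positivity) h1
    rw [Real.log_pow, Real.log_pow] at h2
    push_cast at h2
    linarith
  -- rewrite target
  have htgt : 1 + (k:ℝ)/(2*(s:ℝ)) = (q+4)/2 := by
    rw [hqdef]
    field_simp
    ring
  rw [htgt]
  have hkey := key_ineq hq6
  have hfin : (s:ℝ)/8 * Real.log ((q+4)/2) + (s:ℝ) * Real.log 2 + Real.log (s:ℝ)
      ≤ 3*(s:ℝ)/4 * Real.log q := by
    have hmul := mul_le_mul_of_nonneg_left hkey (le_of_lt hS0)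
    have hexp : (s:ℝ) * ((1/8) * Real.log ((q+4)/2) + Real.log 2 + Real.log 3 / 3)
        = (s:ℝ)/8 * Real.log ((q+4)/2) + (s:ℝ)*Real.log 2 + (s:ℝ)*Real.log 3/3 := by
      ring
    have hexp2 : (s:ℝ) * ((3/4) * Real.log q) = 3*(s:ℝ)/4 * Real.log q := by ring
    rw [hexp, hexp2] at hmul
    linarith
  linarith

/-- Sparse Varshamov–Gilbert lemma: for `1 ≤ s ≤ k/8` there is a set of `s`-sparse
binary vectors with pairwise Hamming distance at least `s/2` and
`log M ≥ (s/8) log(1 + k/(2s))`. -/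
theorem stmt_7 (k s : ℕ) (hs : 1 ≤ s) (hk : (s : ℝ) ≤ (k : ℝ) / 8) :
    ∃ T : Finset (Fin k → Bool),
      (∀ ω ∈ T, (Finset.univ.filter (fun i => ω i = true)).card = s) ∧
      (∀ ω ∈ T, ∀ ω' ∈ T, ω ≠ ω' → (s : ℝ) / 2 ≤ hammingDist ω ω') ∧
      (s : ℝ) / 8 * Real.log (1 + (k : ℝ) / (2 * s)) ≤ Real.log T.card := by
  have hk8 : 8*s ≤ k := by
    have h8 : (8:ℝ) * (s:ℝ) ≤ (k:ℝ) := by linarith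
    exact_mod_cast h8
  set m := (s-1)/4 with hmdef
  have hm1 : 4*m + 1 ≤ s := by omega
  have hmj : ∀ j, 4*j < s → j ≤ m := by omega
  have hms : 2*m ≤ k - s := by omega
  -- maximal code among s-subsets
  obtain ⟨T', hT'sub, hT'pair, hT'cov⟩ :=
    exists_maximal_code (powersetCard s (univ : Finset (Fin k)))
      (fun A B => s ≤ 2*((symmDiff A B).card))
      (fun A B h => by
        rwa [symmDiff_comm])
  -- covering bound
  have hcover : k.choose s ≤ T'.card * (2^s * ((m+1) * (k-s).choose m)) := by
    have hsub : powersetCard s (univ : Finset (Fin k)) ⊆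
        T'.biUnion (fun B => (powersetCard s (univ : Finset (Fin k))).filter
          (fun A => A = B ∨ ¬ (s ≤ 2*((symmDiff A B).card)))) := by
      intro A hA
      obtain ⟨B, hB, hor⟩ := hT'cov A hA
      exact mem_biUnion.2 ⟨B, hB, mem_filter.2 ⟨hA, hor⟩⟩
    calc k.choose s
        = (powersetCard s (univ : Finset (Fin k))).card := by
          rw [card_powersetCard, card_univ, Fintype.card_fin]
      _ ≤ (T'.biUnion (fun B => (powersetCard s (univ : Finset (Fin k))).filter
          (fun A => A = B ∨ ¬ (s ≤ 2*((symmDiff A B).card))))).card :=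
          card_le_card hsub
      _ ≤ T'.card * (2^s * ((m+1) * (k-s).choose m)) := by
          apply card_biUnion_le_card_mul
          intro B hB
          have hBcard : B.card = s :=
            (mem_powersetCard.1 (hT'sub hB)).2
          exact ball_card_le hs hk8 hmj hms B hBcard
  -- nat chain
  have hchain : (k - 2*s)^(s-m) ≤ s^(s-m) * T'.card * 2^s * (m+1) := by
    set C := (k-s).choose m with hC
    have hr := choose_ratio (n := k-s) (s := s) (by omega) (s-m) m (by omega)
    rw [show m + (s-m) = s by omega, show k-s-s = k-2*s by omega] at hr
    have hc2 : (k-s).choose s ≤ k.choose s := Nat.choose_le_choose s (by omega)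
    have hCpos : 0 < C := Nat.choose_pos (by omega)
    have key : (k - 2*s)^(s-m) * C ≤ (s^(s-m) * T'.card * 2^s * (m+1)) * C := by
      calc (k - 2*s)^(s-m) * C ≤ s^(s-m) * (k-s).choose s := hr
        _ ≤ s^(s-m) * k.choose s := Nat.mul_le_mul_left _ hc2
        _ ≤ s^(s-m) * (T'.card * (2^s * ((m+1) * C))) :=
            Nat.mul_le_mul_left _ hcover
        _ = (s^(s-m) * T'.card * 2^s * (m+1)) * C := by ring
    exact Nat.le_of_mul_le_mul_right key hCpos
  have hlogT : (s:ℝ)/8 * Real.log (1 + (k:ℝ)/(2*(s:ℝ))) ≤ Real.log T'.card :=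
    endgame hs hk8 hm1 hchain
  -- map to Bool vectors
  classical
  let e : Finset (Fin k) → (Fin k → Bool) := fun A i => decide (i ∈ A)
  have he_inj : Function.Injective e := by
    intro A B h
    ext i
    have := congrFun h i
    simpa [e, decide_eq_decide] using this
  have hham : ∀ A B : Finset (Fin k),
      hammingDist (e A) (e B) = (symmDiff A B).card := by
    intro A B
    simp only [hammingDist]
    congr 1
    ext i
    simp only [mem_filter, mem_univ, true_and, Finset.mem_symmDiff, e, ne_eq,
      decide_eq_decide]
    tauto
  refine ⟨T'.image e, ?_, ?_, ?_⟩
  · intro ω hω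
    obtain ⟨A, hA, rfl⟩ := mem_image.1 hω
    have hAcard : A.card = s := (mem_powersetCard.1 (hT'sub hA)).2
    have : (Finset.univ.filter (fun i => e A i = true)) = A := by
      ext i
      simp [e]
    rw [this, hAcard]
  · intro ω hω ω' hω' hne
    obtain ⟨A, hA, rfl⟩ := mem_image.1 hω
    obtain ⟨A', hA', rfl⟩ := mem_image.1 hω'
    have hAA : A ≠ A' := fun h => hne (by rw [h])
    have hd := hT'pair A hA A' hA' hAA
    rw [hham A A']
    have : (s:ℝ) ≤ 2 * ((symmDiff A A').card : ℝ) := by exact_mod_cast hd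
    linarith
  · rw [card_image_of_injective _ he_inj]
    exact hlogT
end

section
/- Let N₁, …, N_k be random variables with N_a ∼ Binomial(n, π_a), where π_a ≤ C₂/k for all a and n ≥ γ k log k for constants C₂, γ > 0. Then E(max_{1≤a≤k} N_a²) ≤ C · n²/k² for a constant C depending only on C₂ and γ (for a suitable choice of γ and provided k ≥ 2). -/
open MeasureTheory Finset
open Nat

lemma aux_term_bound (n m : ℕ) (p : ℝ) (hp0 : 0 ≤ p) (hp1 : p ≤ 1)
    (hm1 : 1 ≤ m) (hm : (Real.exp 1)^2 * ((n:ℝ) * p) ≤ m) :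
    (n.choose m : ℝ) * p ^ m * (1 - p) ^ (n - m) ≤ Real.exp (-(m:ℝ)) := by
  have hE : (0:ℝ) < Real.exp 1 := Real.exp_pos 1
  have h1 : (n.choose m : ℝ) * p ^ m * (1 - p) ^ (n - m) ≤ (n.choose m : ℝ) * p ^ m := by
    have : (1 - p) ^ (n - m) ≤ 1 := pow_le_one₀ (by linarith) (by linarith)
    have hnn : (0:ℝ) ≤ (n.choose m : ℝ) * p ^ m := by positivity
    nlinarith [pow_nonneg (by linarith : (0:ℝ) ≤ 1 - p) (n - m)]
  have hfp : (0:ℝ) < (m)! := by exact_mod_cast Nat.factorial_pos m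
  have h2 : (n.choose m : ℝ) * p ^ m ≤ ((n:ℝ) * p) ^ m / (m)! := by
    rw [mul_pow, div_eq_mul_inv, mul_assoc, mul_comm ((p:ℝ)^m), ← mul_assoc]
    have := (Nat.choose_le_pow_div (α := ℝ) m n)
    calc (n.choose m : ℝ) * p ^ m ≤ ((n:ℝ)^m / (m)!) * p ^ m := by
          apply mul_le_mul_of_nonneg_right this (by positivity)
      _ = (n:ℝ)^m * ((m)! : ℝ)⁻¹ * p^m := by ring
  have hmpos : (0:ℝ) < m := by exact_mod_cast hm1
  have hfac : ((m:ℝ))^m / (m)! ≤ Real.exp m := by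
    calc ((m:ℝ))^m / (m)! ≤ ∑ i ∈ range (m+1), (m:ℝ) ^ i / (i)! := by
          refine Finset.single_le_sum (f := fun i => (m:ℝ)^i / (i)!) (fun i _ => by positivity) ?_
          simp
      _ ≤ Real.exp m := Real.sum_le_exp_of_nonneg (by positivity) _
  have hfac' : ((m:ℝ))^m * Real.exp (-(m:ℝ)) ≤ (m)! := by
    rw [Real.exp_neg]
    rw [div_le_iff₀ hfp] at hfac
    have hepos : (0:ℝ) < Real.exp m := Real.exp_pos _
    rw [mul_inv_le_iff₀ hepos]
    linarith
  have he : Real.exp 1 ^ m * Real.exp (-(m:ℝ)) = 1 := by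
    rw [← Real.exp_nat_mul, ← Real.exp_add]; simp
  have h3 : ((n:ℝ) * p) ^ m / (m)! ≤ ((n:ℝ) * p * Real.exp 1 / m) ^ m := by
    rw [div_le_iff₀ hfp, div_pow, div_mul_eq_mul_div, le_div_iff₀ (by positivity)]
    calc ((n:ℝ)*p)^m * (m:ℝ)^m
        = ((n:ℝ)*p*Real.exp 1)^m * ((m:ℝ)^m * Real.exp (-(m:ℝ))) := by
          linear_combination (-(((n:ℝ)*p)^m * (m:ℝ)^m)) * he
      _ ≤ ((n:ℝ)*p*Real.exp 1)^m * (m)! := by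
          apply mul_le_mul_of_nonneg_left hfac' (by positivity)
  have h4 : ((n:ℝ) * p * Real.exp 1 / m) ^ m ≤ Real.exp (-(m:ℝ)) := by
    have hle : (n:ℝ) * p * Real.exp 1 / m ≤ Real.exp (-1) := by
      rw [div_le_iff₀ hmpos, Real.exp_neg]
      rw [inv_mul_eq_div, le_div_iff₀ hE]
      nlinarith
    have h0 : (0:ℝ) ≤ (n:ℝ) * p * Real.exp 1 / m := by positivity
    calc ((n:ℝ) * p * Real.exp 1 / m) ^ m ≤ (Real.exp (-1)) ^ m :=
          pow_le_pow_left₀ h0 hle m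
      _ = Real.exp (-(m:ℝ)) := by rw [← Real.exp_nat_mul]; ring_nf
  linarith


lemma aux_geom (s n : ℕ) : ∑ m ∈ Finset.Ioc s n, Real.exp (-(m:ℝ)) ≤ Real.exp (-(s:ℝ)) := by
  have hE : (2:ℝ) < Real.exp 1 := by
    have := Real.exp_one_gt_d9; linarith
  have hr0 : (0:ℝ) < Real.exp (-1) := Real.exp_pos _
  have hr1 : Real.exp (-1:ℝ) < 1 := by
    rw [Real.exp_lt_one_iff]; norm_num
  have key : ∀ m : ℕ, Real.exp (-(m:ℝ)) = Real.exp (-1) ^ m := by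
    intro m; rw [← Real.exp_nat_mul]; ring_nf
  calc ∑ m ∈ Finset.Ioc s n, Real.exp (-(m:ℝ))
      = ∑ m ∈ Finset.Ico (s+1) (n+1), Real.exp (-1:ℝ) ^ m := by
        rw [← Finset.Ico_add_one_add_one_eq_Ioc]; exact Finset.sum_congr rfl (fun m _ => key m)
    _ = ∑ i ∈ Finset.range (n+1-(s+1)), Real.exp (-1:ℝ) ^ (s+1+i) := by
        rw [Finset.sum_Ico_eq_sum_range]
    _ = Real.exp (-1:ℝ) ^ (s+1) * ∑ i ∈ Finset.range (n+1-(s+1)), Real.exp (-1:ℝ) ^ i := by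
        rw [Finset.mul_sum]; exact Finset.sum_congr rfl (fun i _ => by rw [pow_add])
    _ ≤ Real.exp (-1:ℝ) ^ (s+1) * (1 - Real.exp (-1:ℝ))⁻¹ := by
        apply mul_le_mul_of_nonneg_left _ (by positivity)
        have hs : ∑ i ∈ Finset.range (n+1-(s+1)), Real.exp (-1:ℝ) ^ i
            ≤ ∑' i : ℕ, Real.exp (-1:ℝ) ^ i := by
          apply Summable.sum_le_tsum _ (fun i _ => by positivity)
          exact summable_geometric_of_lt_one hr0.le hr1
        rwa [tsum_geometric_of_lt_one hr0.le hr1] at hs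
    _ ≤ Real.exp (-(s:ℝ)) := by
        rw [key s, pow_succ]
        have hx : Real.exp (-1:ℝ) ≤ 2⁻¹ := by
          rw [Real.exp_neg]
          exact inv_anti₀ (by norm_num) hE.le
        have h1 : Real.exp (-1:ℝ) * (1 - Real.exp (-1:ℝ))⁻¹ ≤ 1 := by
          rw [mul_inv_le_iff₀ (by linarith : (0:ℝ) < 1 - Real.exp (-1:ℝ))]
          norm_num at hx ⊢
          linarith
        calc Real.exp (-1:ℝ) ^ s * Real.exp (-1:ℝ) * (1 - Real.exp (-1:ℝ))⁻¹
            = Real.exp (-1:ℝ) ^ s * (Real.exp (-1:ℝ) * (1 - Real.exp (-1:ℝ))⁻¹) := by ring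
          _ ≤ Real.exp (-1:ℝ) ^ s * 1 := mul_le_mul_of_nonneg_left h1 (by positivity)
          _ = Real.exp (-1:ℝ) ^ s := mul_one _


/-- Expected squared maximum of (possibly dependent) binomial counts: if
`N_a ∼ Bin(n, π_a)` with `π_a ≤ C₂/k` and `n ≥ γ k log k`, then for a suitable
constant `γ` there is a constant `C` (depending only on `C₂` and `γ`) with
`E(max_a N_a²) ≤ C n²/k²` for all `k ≥ 2`. -/
theorem stmt_10 (C₂ : ℝ) (hC₂ : 0 < C₂) :
    ∃ γ : ℝ, 0 < γ ∧ ∃ C : ℝ, 0 < C ∧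
    ∀ (k n : ℕ), 2 ≤ k →
    ∀ (Ω : Type) (_ : MeasurableSpace Ω) (μ : Measure Ω), IsProbabilityMeasure μ →
    ∀ (N : Fin k → Ω → ℕ) (π : Fin k → ℝ),
      (∀ a, Measurable (N a)) →
      (∀ a, 0 ≤ π a ∧ π a ≤ C₂ / k) →
      (∀ a, ∀ m : ℕ, (μ {ω | N a ω = m}).toReal
          = (n.choose m : ℝ) * (π a) ^ m * (1 - π a) ^ (n - m)) →
      γ * k * Real.log k ≤ n →
      ∫ ω, (⨆ a, ((N a ω : ℝ)) ^ 2) ∂μ ≤ C * n ^ 2 / k ^ 2 := by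
  have hE : (0:ℝ) < Real.exp 1 := Real.exp_pos 1
  set A : ℝ := (Real.exp 1)^2 * C₂ with hAdef
  have hA : 0 < A := by positivity
  refine ⟨3 / A, by positivity, 4 * A^2 + 1, by positivity, ?_⟩
  intro k n hk Ω inst μ hμ N π hN hπ hpmf hn
  -- basic facts
  have hk0 : (0:ℝ) < k := by exact_mod_cast (by omega : 0 < k)
  have hk2 : (2:ℝ) ≤ k := by exact_mod_cast hk
  have hlog2 : (0:ℝ) < Real.log 2 := Real.log_pos one_lt_two
  have hlogk : Real.log 2 ≤ Real.log k := Real.log_le_log (by norm_num) hk2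
  have hlogk0 : (0:ℝ) < Real.log k := lt_of_lt_of_le hlog2 hlogk
  have hn0 : (0:ℝ) < n := by
    have : 0 < 3 / A * k * Real.log k := mul_pos (mul_pos (by positivity) hk0) hlogk0
    calc (0:ℝ) < 3 / A * k * Real.log k := this
      _ ≤ n := hn
  -- threshold
  set s₀ : ℝ := A * n / k with hs₀def
  have hs₀3 : 3 * Real.log k ≤ s₀ := by
    have h1 : 3 / A * k * Real.log k ≤ (n:ℝ) := hn
    rw [hs₀def, le_div_iff₀ hk0]
    calc 3 * Real.log k * k = A * (3 / A * k * Real.log k) := by field_simp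
      _ ≤ A * n := by apply mul_le_mul_of_nonneg_left h1 hA.le
  have hlog2' : (1:ℝ)/3 < Real.log 2 := by
    have := Real.log_two_gt_d9; linarith
  have hs₀1 : (1:ℝ) ≤ s₀ := by nlinarith
  have hs₀pos : (0:ℝ) < s₀ := by linarith
  set s : ℕ := ⌈s₀⌉₊ with hsdef
  have hss₀ : s₀ ≤ (s:ℝ) := Nat.le_ceil s₀
  have hs2s₀ : (s:ℝ) ≤ 2 * s₀ := by
    have := Nat.ceil_lt_add_one hs₀pos.le
    linarith
  -- π a ≤ 1
  have hn1 : 1 ≤ n := by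
    have : 0 < n := by exact_mod_cast hn0
    omega
  have hπ1 : ∀ a, π a ≤ 1 := by
    intro a
    by_contra h
    push_neg at h
    have h0 : (0:ℝ) ≤ (n.choose (n-1) : ℝ) * (π a) ^ (n-1) * (1 - π a) ^ (n - (n-1)) := by
      rw [← hpmf a (n-1)]; exact ENNReal.toReal_nonneg
    rw [Nat.choose_symm hn1, Nat.choose_one_right, Nat.sub_sub_self hn1, pow_one] at h0
    have hppos : (0:ℝ) < (π a) ^ (n-1) := pow_pos (by linarith) _
    have hnpos : (0:ℝ) < n := hn0
    nlinarith [mul_pos (mul_pos hnpos hppos) (show (0:ℝ) < π a - 1 by linarith)]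
  -- measurable sets
  have hms : ∀ (a : Fin k) (m : ℕ), MeasurableSet {ω | N a ω = m} := by
    intro a m
    exact (hN a) (measurableSet_singleton m)
  set P : Fin k → ℕ → ℝ := fun a m => (μ {ω | N a ω = m}).toReal with hPdef
  have hPnn : ∀ a m, 0 ≤ P a m := fun a m => ENNReal.toReal_nonneg
  -- null set beyond n
  have hnull : ∀ a, μ {ω | n < N a ω} = 0 := by
    intro a
    have hsub : {ω | n < N a ω} ⊆ ⋃ m ∈ Set.Ioi n, {ω | N a ω = m} := by
      intro ω hω
      exact Set.mem_biUnion hω rfl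
    refine measure_mono_null hsub ?_
    rw [measure_biUnion_null_iff (Set.to_countable _)]
    intro m hm
    have h0 : (μ {ω | N a ω = m}).toReal = 0 := by
      rw [hpmf a m, Nat.choose_eq_zero_of_lt hm]
      simp
    have hnetop : μ {ω | N a ω = m} ≠ ⊤ := measure_ne_top μ _
    exact ((ENNReal.toReal_eq_zero_iff _).mp h0).resolve_right hnetop
  have hae : ∀ᵐ ω ∂μ, ∀ a, N a ω ≤ n := by
    rw [ae_all_iff]
    intro a
    rw [ae_iff]
    simpa [not_le] using hnull a
  -- the dominating function
  set Fb : Ω → ℝ := fun ω => (s:ℝ)^2 + ∑ a : Fin k, ∑ m ∈ Finset.Ioc s n,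
      Set.indicator {ω' | N a ω' = m} (fun _ => (m:ℝ)^2) ω with hFbdef
  have hFint : Integrable Fb μ := by
    apply (integrable_const _).add
    apply integrable_finset_sum
    intro a _
    apply integrable_finset_sum
    intro m _
    exact (integrable_const _).indicator (hms a m)
  -- sup rewritten via sup'
  have hnefin : Nonempty (Fin k) := ⟨⟨0, by omega⟩⟩
  have hune : (Finset.univ : Finset (Fin k)).Nonempty := Finset.univ_nonempty
  have hfeq : ∀ ω, (⨆ a, ((N a ω : ℝ))^2) = ((Finset.univ.sup' hune N ω : ℕ):ℝ)^2 := by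
    intro ω
    rw [Finset.sup'_apply]
    apply le_antisymm
    · apply ciSup_le
      intro a
      have h1 : N a ω ≤ Finset.univ.sup' hune (fun a => N a ω) :=
        Finset.le_sup' (fun a => N a ω) (Finset.mem_univ a)
      have h2 : ((N a ω : ℕ):ℝ) ≤ ((Finset.univ.sup' hune (fun a => N a ω) : ℕ):ℝ) := by
        exact_mod_cast h1
      exact pow_le_pow_left₀ (by positivity) h2 2
    · obtain ⟨a₀, _, ha₀⟩ := Finset.exists_mem_eq_sup' hune (fun a => N a ω)
      rw [ha₀]
      exact le_ciSup (f := fun a => ((N a ω : ℝ))^2) (Set.Finite.bddAbove (Set.finite_range _)) a₀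
  have hfmeas : Measurable (fun ω => (⨆ a, ((N a ω : ℝ))^2)) := by
    have heq : (fun ω => (⨆ a, ((N a ω : ℝ))^2))
        = (fun (j:ℕ) => ((j:ℝ))^2) ∘ (Finset.univ.sup' hune N) := funext hfeq
    rw [heq]
    exact measurable_from_nat.comp (Finset.measurable_sup' hune (fun a _ => hN a))
  have hfnn : ∀ ω, 0 ≤ (⨆ a, ((N a ω : ℝ))^2) := by
    intro ω; rw [hfeq ω]; positivity
  -- a.e. pointwise bound
  have hbound : ∀ᵐ ω ∂μ, (⨆ a, ((N a ω : ℝ))^2) ≤ Fb ω := by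
    filter_upwards [hae] with ω hω
    apply ciSup_le
    intro a
    have hinn : ∀ (b : Fin k), 0 ≤ ∑ m ∈ Finset.Ioc s n,
        Set.indicator {ω' | N b ω' = m} (fun _ => (m:ℝ)^2) ω := by
      intro b
      apply Finset.sum_nonneg
      intro m _
      exact Set.indicator_nonneg (fun _ _ => by positivity) ω
    by_cases hc : N a ω ≤ s
    · have h1 : ((N a ω : ℝ))^2 ≤ (s:ℝ)^2 := by
        have hle : ((N a ω : ℕ):ℝ) ≤ ((s:ℕ):ℝ) := by exact_mod_cast hc
        exact pow_le_pow_left₀ (by positivity) hle 2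
      have h2 : 0 ≤ ∑ a : Fin k, ∑ m ∈ Finset.Ioc s n,
          Set.indicator {ω' | N a ω' = m} (fun _ => (m:ℝ)^2) ω :=
        Finset.sum_nonneg (fun b _ => hinn b)
      simp only [hFbdef]
      linarith
    · push_neg at hc
      have hmem : N a ω ∈ Finset.Ioc s n := Finset.mem_Ioc.mpr ⟨hc, hω a⟩
      have h1 : ((N a ω : ℝ))^2 ≤ ∑ m ∈ Finset.Ioc s n,
          Set.indicator {ω' | N a ω' = m} (fun _ => (m:ℝ)^2) ω := by
        have hs1 := Finset.single_le_sum
          (f := fun m => Set.indicator {ω' | N a ω' = m} (fun _ => (m:ℝ)^2) ω)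
          (fun m _ => Set.indicator_nonneg (fun _ _ => by positivity) ω) hmem
        rwa [Set.indicator_of_mem (show ω ∈ {ω' | N a ω' = N a ω} from rfl)] at hs1
      have h2 := Finset.single_le_sum
        (f := fun b => ∑ m ∈ Finset.Ioc s n, Set.indicator {ω' | N b ω' = m} (fun _ => (m:ℝ)^2) ω)
        (fun b _ => hinn b) (Finset.mem_univ a)
      simp only [hFbdef]
      have h3 : (0:ℝ) ≤ (s:ℝ)^2 := by positivity
      linarith
  have hfint : Integrable (fun ω => (⨆ a, ((N a ω : ℝ))^2)) μ := by
    apply hFint.mono' hfmeas.aestronglyMeasurable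
    filter_upwards [hbound] with ω hω
    rw [Real.norm_of_nonneg (hfnn ω)]
    exact hω
  have hint_le : ∫ ω, (⨆ a, ((N a ω : ℝ))^2) ∂μ ≤ ∫ ω, Fb ω ∂μ :=
    integral_mono_ae hfint hFint hbound
  -- compute ∫ Fb
  have hFval : ∫ ω, Fb ω ∂μ
      = (s:ℝ)^2 + ∑ a : Fin k, ∑ m ∈ Finset.Ioc s n, P a m * (m:ℝ)^2 := by
    simp only [hFbdef]
    rw [integral_add (integrable_const _) (integrable_finset_sum _
      (fun a _ => integrable_finset_sum _ (fun m _ => (integrable_const _).indicator (hms a m))))]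
    rw [integral_const]
    simp only [probReal_univ, one_smul]
    congr 1
    rw [integral_finset_sum _ (fun a _ => integrable_finset_sum _
      (fun m _ => (integrable_const _).indicator (hms a m)))]
    apply Finset.sum_congr rfl
    intro a _
    rw [integral_finset_sum _ (fun m _ => (integrable_const _).indicator (hms a m))]
    apply Finset.sum_congr rfl
    intro m _
    rw [integral_indicator_const _ (hms a m)]
    simp [hPdef, smul_eq_mul, Measure.real]
  -- tail bound per a
  have hs1nat : 1 ≤ s := by
    have h1 : (1:ℝ) ≤ (s:ℝ) := le_trans hs₀1 hss₀
    exact_mod_cast h1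
  have htail : ∀ a : Fin k, ∑ m ∈ Finset.Ioc s n, P a m * (m:ℝ)^2
      ≤ (n:ℝ)^2 * Real.exp (-s₀) := by
    intro a
    have hterm : ∀ m ∈ Finset.Ioc s n, P a m * (m:ℝ)^2 ≤ (n:ℝ)^2 * Real.exp (-(m:ℝ)) := by
      intro m hm
      obtain ⟨hms', hmn⟩ := Finset.mem_Ioc.mp hm
      have hm1 : 1 ≤ m := by omega
      have hcond : (Real.exp 1)^2 * ((n:ℝ) * π a) ≤ (m:ℝ) := by
        have hstep : (Real.exp 1)^2 * ((n:ℝ) * π a) ≤ (Real.exp 1)^2 * ((n:ℝ) * (C₂ / k)) := by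
          apply mul_le_mul_of_nonneg_left _ (by positivity)
          exact mul_le_mul_of_nonneg_left (hπ a).2 hn0.le
        have heqs : (Real.exp 1)^2 * ((n:ℝ) * (C₂ / k)) = s₀ := by
          rw [hs₀def, hAdef]; field_simp
        have hsm : (s:ℝ) ≤ (m:ℝ) := by exact_mod_cast hms'.le
        linarith
      have hP : P a m ≤ Real.exp (-(m:ℝ)) := by
        rw [hPdef]
        simp only
        rw [hpmf a m]
        exact aux_term_bound n m (π a) (hπ a).1 (hπ1 a) hm1 hcond
      have hmn' : ((m:ℕ):ℝ)^2 ≤ ((n:ℕ):ℝ)^2 := by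
        have : ((m:ℕ):ℝ) ≤ ((n:ℕ):ℝ) := by exact_mod_cast hmn
        exact pow_le_pow_left₀ (by positivity) this 2
      calc P a m * (m:ℝ)^2 ≤ Real.exp (-(m:ℝ)) * (n:ℝ)^2 :=
            mul_le_mul hP hmn' (by positivity) (Real.exp_pos _).le
        _ = (n:ℝ)^2 * Real.exp (-(m:ℝ)) := by ring
    calc ∑ m ∈ Finset.Ioc s n, P a m * (m:ℝ)^2
        ≤ ∑ m ∈ Finset.Ioc s n, (n:ℝ)^2 * Real.exp (-(m:ℝ)) := Finset.sum_le_sum hterm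
      _ = (n:ℝ)^2 * ∑ m ∈ Finset.Ioc s n, Real.exp (-(m:ℝ)) := by rw [Finset.mul_sum]
      _ ≤ (n:ℝ)^2 * Real.exp (-(s:ℝ)) :=
            mul_le_mul_of_nonneg_left (aux_geom s n) (by positivity)
      _ ≤ (n:ℝ)^2 * Real.exp (-s₀) := by
            apply mul_le_mul_of_nonneg_left _ (by positivity)
            exact Real.exp_le_exp.mpr (by linarith)
  -- assemble
  have hexp : Real.exp (-s₀) ≤ ((k:ℝ)^3)⁻¹ := by
    have h1 : Real.exp (-s₀) ≤ Real.exp (-(3*Real.log k)) := Real.exp_le_exp.mpr (by linarith)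
    have h2 : Real.exp (-(3*Real.log (k:ℝ))) = ((k:ℝ)^3)⁻¹ := by
      rw [Real.exp_neg]
      congr 1
      rw [show (3:ℝ)*Real.log (k:ℝ) = Real.log ((k:ℝ)^3) by rw [Real.log_pow]; push_cast; ring]
      exact Real.exp_log (by positivity)
    rw [h2] at h1
    exact h1
  have hsum2 : ∑ a : Fin k, ∑ m ∈ Finset.Ioc s n, P a m * (m:ℝ)^2 ≤ (n:ℝ)^2 / (k:ℝ)^2 := by
    calc ∑ a : Fin k, ∑ m ∈ Finset.Ioc s n, P a m * (m:ℝ)^2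
        ≤ ∑ _a : Fin k, (n:ℝ)^2 * Real.exp (-s₀) := Finset.sum_le_sum (fun a _ => htail a)
      _ = (k:ℝ) * ((n:ℝ)^2 * Real.exp (-s₀)) := by
          rw [Finset.sum_const, Finset.card_univ, Fintype.card_fin, nsmul_eq_mul]
      _ ≤ (k:ℝ) * ((n:ℝ)^2 * ((k:ℝ)^3)⁻¹) := by
          apply mul_le_mul_of_nonneg_left _ hk0.le
          exact mul_le_mul_of_nonneg_left hexp (by positivity)
      _ = (n:ℝ)^2 / (k:ℝ)^2 := by field_simp
  have hs2 : (s:ℝ)^2 ≤ 4*A^2 * (n:ℝ)^2/(k:ℝ)^2 := by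
    calc (s:ℝ)^2 ≤ (2*s₀)^2 := pow_le_pow_left₀ (by positivity) hs2s₀ 2
      _ = 4*A^2*(n:ℝ)^2/(k:ℝ)^2 := by rw [hs₀def]; field_simp; ring
  calc ∫ ω, (⨆ a, ((N a ω : ℝ))^2) ∂μ ≤ ∫ ω, Fb ω ∂μ := hint_le
    _ = (s:ℝ)^2 + ∑ a : Fin k, ∑ m ∈ Finset.Ioc s n, P a m * (m:ℝ)^2 := hFval
    _ ≤ 4*A^2 * (n:ℝ)^2/(k:ℝ)^2 + (n:ℝ)^2 / (k:ℝ)^2 := add_le_add hs2 hsum2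
    _ = (4*A^2 + 1) * (n:ℝ)^2 / (k:ℝ)^2 := by ring
end

section
/- Fix m ≥ 1, constants 0 < ε ≤ μ̂(x) for a measurable function μ̂ on [0,1]^d, constants α, β with 0 < α ≤ ε/2, and signs λ₁,…,λ_m ∈ {−1,1}. Let B₁,…,B_m : [0,1]^d → {−1,0,1} satisfy ∫B_j = 0, ∫B_j² = 1/m, and B_j·B_{j'} = 0 pointwise for j ≠ j'. Define μ_λ(x) = (μ̂(x) + βΣ_j λ_j B_j(x)) / (1 − (α/μ̂(x))Σ_j λ_j B_j(x)). Then ∫(μ̂(x) − μ_λ(x))² dx ≤ 4(α+β)². -/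
open MeasureTheory Finset

/-- L² perturbation bound for the alternative regression function
`μ_λ = (μ̂ + β Σ_j λ_j B_j)/(1 − (α/μ̂) Σ_j λ_j B_j)` built from disjointly supported
bump functions `B_j` on `[0,1]^d`: `∫ (μ̂ − μ_λ)² ≤ 4(α+β)²`. -/
theorem stmt_18 (d m : ℕ) (hm : 1 ≤ m) (ε α β : ℝ)
    (hε : 0 < ε) (hα : 0 < α) (hαε : α ≤ ε / 2)
    (μh : (Fin d → ℝ) → ℝ) (hμhm : Measurable μh) (hμh : ∀ x, ε ≤ μh x)
    (lam : Fin m → ℝ) (hlam : ∀ j, lam j = 1 ∨ lam j = -1)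
    (Bf : Fin m → (Fin d → ℝ) → ℝ)
    (hBmeas : ∀ j, Measurable (Bf j))
    (hBval : ∀ j x, Bf j x = -1 ∨ Bf j x = 0 ∨ Bf j x = 1)
    (hBint : ∀ j, (∫ x in Set.Icc (0 : Fin d → ℝ) 1, Bf j x) = 0)
    (hBsq : ∀ j, (∫ x in Set.Icc (0 : Fin d → ℝ) 1, (Bf j x) ^ 2) = 1 / m)
    (hBdisj : ∀ j j', j ≠ j' → ∀ x, Bf j x * Bf j' x = 0) :
    (∫ x in Set.Icc (0 : Fin d → ℝ) 1,
        (μh x - (μh x + β * ∑ j, lam j * Bf j x)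
            / (1 - (α / μh x) * ∑ j, lam j * Bf j x)) ^ 2)
      ≤ 4 * (α + β) ^ 2 := by
  have hμpos : ∀ x, 0 < μh x := fun x => lt_of_lt_of_le hε (hμh x)
  have hQmeas : MeasurableSet (Set.Icc (0 : Fin d → ℝ) 1) := measurableSet_Icc
  have hQfin : volume (Set.Icc (0 : Fin d → ℝ) 1) < ⊤ := isCompact_Icc.measure_lt_top
  have hB1 : ∀ j x, (Bf j x) ^ 2 ≤ 1 := by
    intro j x; rcases hBval j x with h | h | h <;> rw [h] <;> norm_num
  have hsum : ∀ x, ∑ j, (Bf j x) ^ 2 ≤ 1 := by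
    intro x
    by_cases h : ∀ j, Bf j x = 0
    · simp [h]
    · push_neg at h; obtain ⟨j0, hj0⟩ := h
      rw [Finset.sum_eq_single j0]
      · exact hB1 j0 x
      · intro j _ hj
        rcases mul_eq_zero.mp (hBdisj j j0 hj x) with h' | h'
        · rw [h']; ring
        · exact absurd h' hj0
      · simp
  have hS2 : ∀ x, (∑ j, lam j * Bf j x) ^ 2 = ∑ j, (Bf j x) ^ 2 := by
    intro x
    rw [sq, Finset.sum_mul_sum]
    apply Finset.sum_congr rfl
    intro j _
    rw [Finset.sum_eq_single j]
    · rcases hlam j with h | h <;> rw [h] <;> ring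
    · intro j' _ hj'
      calc (lam j * Bf j x) * (lam j' * Bf j' x)
          = (lam j * lam j') * (Bf j x * Bf j' x) := by ring
        _ = 0 := by rw [hBdisj j j' (Ne.symm hj') x]; ring
    · simp
  have hSle : ∀ x, |∑ j, lam j * Bf j x| ≤ 1 := by
    intro x
    have h1 : (∑ j, lam j * Bf j x) ^ 2 ≤ 1 := by rw [hS2 x]; exact hsum x
    nlinarith [abs_nonneg (∑ j, lam j * Bf j x), sq_abs (∑ j, lam j * Bf j x)]
  have hD : ∀ x, (1 : ℝ) / 2 ≤ 1 - (α / μh x) * ∑ j, lam j * Bf j x := by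
    intro x
    have hfrac : α / μh x ≤ 1 / 2 := by
      have h1 : α / μh x ≤ α / ε := div_le_div_of_nonneg_left hα.le hε (hμh x)
      have h2 : α / ε ≤ 1 / 2 := by
        rw [div_le_div_iff₀ hε (by norm_num)]; linarith
      linarith
    have habs : |(α / μh x) * ∑ j, lam j * Bf j x| ≤ 1 / 2 := by
      rw [abs_mul]
      have hnn : 0 ≤ α / μh x := div_nonneg hα.le (hμpos x).le
      calc |α / μh x| * |∑ j, lam j * Bf j x|
          ≤ (1 / 2) * 1 := by
            apply mul_le_mul _ (hSle x) (abs_nonneg _) (by norm_num)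
            rwa [abs_of_nonneg hnn]
        _ = 1 / 2 := by norm_num
    have := abs_le.mp habs
    linarith [this.2]
  have hkey : ∀ x,
      (μh x - (μh x + β * ∑ j, lam j * Bf j x)
          / (1 - (α / μh x) * ∑ j, lam j * Bf j x)) ^ 2
        ≤ 4 * (α + β) ^ 2 * ∑ j, (Bf j x) ^ 2 := by
    intro x
    have hDhalf := hD x
    have hμne : μh x ≠ 0 := (hμpos x).ne'
    set S := ∑ j, lam j * Bf j x with hSdef
    set D := 1 - (α / μh x) * S with hDdef
    have hSsq : S ^ 2 = ∑ j, (Bf j x) ^ 2 := hS2 x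
    have hμD : μh x * D = μh x - α * S := by
      rw [hDdef]; field_simp
    clear_value D S
    rw [← hSsq]
    have hDpos : 0 < D := by linarith
    have h1 : (μh x - (μh x + β * S) / D) * D = -((α + β) * S) := by
      rw [sub_mul, div_mul_cancel₀ _ hDpos.ne', hμD]; ring
    have hident : μh x - (μh x + β * S) / D = -((α + β) * S) / D := by
      rw [← h1, mul_div_assoc, div_self hDpos.ne', mul_one]
    rw [hident, div_pow, div_le_iff₀ (by positivity)]
    have h4 : (1:ℝ) ≤ 4 * D ^ 2 := by nlinarith [hDhalf, hDpos]
    nlinarith [mul_le_mul_of_nonneg_left h4 (mul_nonneg (sq_nonneg (α + β)) (sq_nonneg S))]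
  -- integrability
  have hintB : ∀ j, IntegrableOn (fun x => (Bf j x) ^ 2) (Set.Icc (0 : Fin d → ℝ) 1) := by
    intro j
    apply Measure.integrableOn_of_bounded hQfin.ne ((hBmeas j).pow_const 2).aestronglyMeasurable
    filter_upwards with x
    rw [Real.norm_eq_abs, abs_of_nonneg (sq_nonneg _)]
    exact hB1 j x
  have hintg : IntegrableOn (fun x => 4 * (α + β) ^ 2 * ∑ j, (Bf j x) ^ 2)
      (Set.Icc (0 : Fin d → ℝ) 1) := by
    apply Integrable.const_mul
    exact integrable_finset_sum _ (fun j _ => hintB j)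
  have hfmeas : Measurable (fun x =>
      (μh x - (μh x + β * ∑ j, lam j * Bf j x)
          / (1 - (α / μh x) * ∑ j, lam j * Bf j x)) ^ 2) := by
    apply Measurable.pow_const
    apply hμhm.sub
    apply Measurable.div
    · exact hμhm.add (measurable_const.mul (Finset.measurable_sum _ (fun j _ => measurable_const.mul (hBmeas j))))
    · exact measurable_const.sub ((measurable_const.div hμhm).mul (Finset.measurable_sum _ (fun j _ => measurable_const.mul (hBmeas j))))
  have hintf : IntegrableOn (fun x =>
      (μh x - (μh x + β * ∑ j, lam j * Bf j x)
          / (1 - (α / μh x) * ∑ j, lam j * Bf j x)) ^ 2)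
      (Set.Icc (0 : Fin d → ℝ) 1) := by
    apply Measure.integrableOn_of_bounded (M := 4 * (α + β) ^ 2) hQfin.ne
      hfmeas.aestronglyMeasurable
    filter_upwards with x
    rw [Real.norm_eq_abs, abs_of_nonneg (sq_nonneg _)]
    calc (μh x - (μh x + β * ∑ j, lam j * Bf j x)
          / (1 - (α / μh x) * ∑ j, lam j * Bf j x)) ^ 2
        ≤ 4 * (α + β) ^ 2 * ∑ j, (Bf j x) ^ 2 := hkey x
      _ ≤ 4 * (α + β) ^ 2 * 1 := by
          apply mul_le_mul_of_nonneg_left (hsum x) (by positivity)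
      _ = 4 * (α + β) ^ 2 := by ring
  calc (∫ x in Set.Icc (0 : Fin d → ℝ) 1,
        (μh x - (μh x + β * ∑ j, lam j * Bf j x)
            / (1 - (α / μh x) * ∑ j, lam j * Bf j x)) ^ 2)
      ≤ ∫ x in Set.Icc (0 : Fin d → ℝ) 1, 4 * (α + β) ^ 2 * ∑ j, (Bf j x) ^ 2 :=
        setIntegral_mono_on hintf hintg hQmeas (fun x _ => hkey x)
    _ = 4 * (α + β) ^ 2 * ∫ x in Set.Icc (0 : Fin d → ℝ) 1, ∑ j, (Bf j x) ^ 2 :=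
        integral_const_mul _ _
    _ = 4 * (α + β) ^ 2 * ∑ j : Fin m, (1 / m : ℝ) := by
        rw [integral_finset_sum _ (fun j _ => hintB j)]
        congr 1
        exact Finset.sum_congr rfl (fun j _ => hBsq j)
    _ = 4 * (α + β) ^ 2 := by
        rw [Finset.sum_const, Finset.card_univ, Fintype.card_fin, nsmul_eq_mul]
        rw [mul_one_div, div_self (by exact_mod_cast Nat.one_le_iff_ne_zero.mp hm)]
        ring
end

section
/- Under the hypotheses of the previous construction with 0 < α ≤ ε/2 and the additional assumptions α³ ≤ (ε/2)α², ∫B_j = ∫B_j³ = 0 and ∫B_j² = 1/m for each j, the functionals satisfy ∫μ_λ(x)dx − ∫μ̂(x)dx ≥ (ε/2)·αβ, where μ_λ(x) = (μ̂(x) + βΣ_j λ_j B_j(x))/(1 − (α/μ̂(x))Σ_j λ_j B_j(x)) and ε ≤ μ̂(x) ≤ 1. -/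
open MeasureTheory Finset

/-- Separation of the mean functional under the alternative construction:
with `μ_λ = (μ̂ + β Σ_j λ_j B_j)/(1 − (α/μ̂) Σ_j λ_j B_j)`, `ε ≤ μ̂ ≤ 1`,
`0 < α ≤ ε/2`, `α³ ≤ (ε/2) α²`, `∫ B_j = ∫ B_j³ = 0` and `∫ B_j² = 1/m`,
we have `∫ μ_λ − ∫ μ̂ ≥ (ε/2) α β`. -/
theorem stmt_19 (d m : ℕ) (hm : 1 ≤ m) (ε α β : ℝ)
    (hε : 0 < ε) (hα : 0 < α) (hαε : α ≤ ε / 2) (hβ : 0 < β)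
    (hα3 : α ^ 3 ≤ (ε / 2) * α ^ 2)
    (μh : (Fin d → ℝ) → ℝ) (hμhm : Measurable μh)
    (hμh : ∀ x, ε ≤ μh x) (hμh1 : ∀ x, μh x ≤ 1)
    (lam : Fin m → ℝ) (hlam : ∀ j, lam j = 1 ∨ lam j = -1)
    (Bf : Fin m → (Fin d → ℝ) → ℝ)
    (hBmeas : ∀ j, Measurable (Bf j))
    (hBval : ∀ j x, Bf j x = -1 ∨ Bf j x = 0 ∨ Bf j x = 1)
    (hBint : ∀ j, (∫ x in Set.Icc (0 : Fin d → ℝ) 1, Bf j x) = 0)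
    (hBcube : ∀ j, (∫ x in Set.Icc (0 : Fin d → ℝ) 1, (Bf j x) ^ 3) = 0)
    (hBsq : ∀ j, (∫ x in Set.Icc (0 : Fin d → ℝ) 1, (Bf j x) ^ 2) = 1 / m)
    (hBdisj : ∀ j j', j ≠ j' → ∀ x, Bf j x * Bf j' x = 0) :
    (ε / 2) * (α * β)
      ≤ (∫ x in Set.Icc (0 : Fin d → ℝ) 1,
            (μh x + β * ∑ j, lam j * Bf j x) / (1 - (α / μh x) * ∑ j, lam j * Bf j x))
        - ∫ x in Set.Icc (0 : Fin d → ℝ) 1, μh x := by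
  have hε1 : ε ≤ 1 := le_trans (hμh 0) (hμh1 0)
  set S : (Fin d → ℝ) → ℝ := fun x => ∑ j, lam j * Bf j x with hSdef
  set I : Set (Fin d → ℝ) := Set.Icc (0 : Fin d → ℝ) 1 with hIdef
  have hIfin : volume I < ⊤ := (isCompact_Icc).measure_lt_top
  -- integrability of bounded measurable functions on I
  have key : ∀ (f : (Fin d → ℝ) → ℝ), Measurable f → ∀ C : ℝ, (∀ x, |f x| ≤ C) →
      IntegrableOn f I := by
    intro f hf C hC
    refine ⟨hf.aestronglyMeasurable, ?_⟩
    exact HasFiniteIntegral.restrict_of_bounded C hIfin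
      (Filter.Eventually.of_forall fun x => by simpa using hC x)
  have hBabs : ∀ j x, |Bf j x| ≤ 1 := by
    intro j x; rcases hBval j x with h | h | h <;> simp [h]
  have hdisj : ∀ x j, Bf j x ≠ 0 → ∀ j', j' ≠ j → Bf j' x = 0 := by
    intro x j hj j' hj'
    rcases mul_eq_zero.mp (hBdisj j j' (Ne.symm hj') x) with h | h
    · exact absurd h hj
    · exact h
  have hSmeas : Measurable S := by
    apply Finset.measurable_sum
    exact fun j _ => measurable_const.mul (hBmeas j)
  have hSval : ∀ x, S x = -1 ∨ S x = 0 ∨ S x = 1 := by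
    intro x
    by_cases h : ∃ j, Bf j x ≠ 0
    · obtain ⟨j, hj⟩ := h
      have hsum : S x = lam j * Bf j x := by
        apply Finset.sum_eq_single
        · intro j' _ hne; rw [hdisj x j hj j' hne, mul_zero]
        · intro h; exact absurd (Finset.mem_univ j) h
      rcases hlam j with h1 | h1 <;> rcases hBval j x with h2 | h2 | h2 <;>
        rw [hsum, h1, h2] <;> norm_num
    · push_neg at h
      right; left
      simp only [hSdef]
      exact Finset.sum_eq_zero fun j _ => by rw [h j, mul_zero]
  have hSabs : ∀ x, |S x| ≤ 1 := by
    intro x; rcases hSval x with h | h | h <;> simp [h]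
  have hSsq : ∀ x, (S x) ^ 2 = ∑ j, (Bf j x) ^ 2 := by
    intro x
    by_cases h : ∃ j, Bf j x ≠ 0
    · obtain ⟨j, hj⟩ := h
      have hsum : S x = lam j * Bf j x := by
        apply Finset.sum_eq_single
        · intro j' _ hne; rw [hdisj x j hj j' hne, mul_zero]
        · intro h; exact absurd (Finset.mem_univ j) h
      have hsum2 : ∑ j', (Bf j' x) ^ 2 = (Bf j x) ^ 2 := by
        apply Finset.sum_eq_single
        · intro j' _ hne; rw [hdisj x j hj j' hne]; ring
        · intro h; exact absurd (Finset.mem_univ j) h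
      rw [hsum, hsum2, mul_pow]
      rcases hlam j with h1 | h1 <;> rw [h1] <;> ring
    · push_neg at h
      have h1 : S x = 0 := by
        simp only [hSdef]
        exact Finset.sum_eq_zero fun j _ => by rw [h j, mul_zero]
      rw [h1]
      rw [Finset.sum_eq_zero fun j _ => by rw [h j]; ring]
      ring
  -- pointwise inequality
  have hmain : ∀ x, (α + β) * S x + (ε / 2) * (α * β) * (S x) ^ 2
      ≤ (μh x + β * S x) / (1 - (α / μh x) * S x) - μh x := by
    intro x
    have hμpos : 0 < μh x := lt_of_lt_of_le hε (hμh x)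
    have habs := abs_le.mp (hSabs x)
    have hD : ε / 2 ≤ μh x - α * S x := by nlinarith [hμh x]
    have hDpos : 0 < μh x - α * S x := lt_of_lt_of_le (by linarith) hD
    have hDle : μh x - α * S x ≤ 3 / 2 := by nlinarith [hμh1 x]
    have hden : 1 - (α / μh x) * S x = (μh x - α * S x) / μh x := by
      field_simp
    have hidentity : (μh x + β * S x) / (1 - (α / μh x) * S x) - μh x
        = (α + β) * S x + α * (α + β) * (S x) ^ 2 / (μh x - α * S x) := by
      rw [hden]
      have h1 : μh x - α * S x ≠ 0 := hDpos.ne'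
      rw [div_div_eq_mul_div, sub_eq_iff_eq_add, div_eq_iff h1]
      have h3 : α * (α + β) * S x ^ 2 / (μh x - α * S x) * (μh x - α * S x)
          = α * (α + β) * S x ^ 2 := div_mul_cancel₀ _ h1
      linear_combination (-1 : ℝ) * h3
    rw [hidentity]
    have h1 : (ε / 2) * (α * β) * (S x) ^ 2 ≤ α * (α + β) * (S x) ^ 2 / (μh x - α * S x) := by
      rw [le_div_iff₀ hDpos]
      have hu : 0 ≤ α * β * (S x) ^ 2 := mul_nonneg (mul_nonneg hα.le hβ.le) (sq_nonneg (S x))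
      have hv : 0 ≤ α * α * (S x) ^ 2 := mul_nonneg (mul_nonneg hα.le hα.le) (sq_nonneg (S x))
      have he1 : ε / 2 * (α * β) * (S x) ^ 2 * (μh x - α * S x)
          ≤ ε / 2 * (α * β) * (S x) ^ 2 * (3 / 2) := by
        apply mul_le_mul_of_nonneg_left hDle
        positivity
      have he2 : 0 ≤ (1 - ε) * (α * β * (S x) ^ 2) := mul_nonneg (by linarith) hu
      nlinarith [he1, he2, hu, hv]
    linarith
  -- integrability
  have hSint : IntegrableOn S I := key S hSmeas 1 hSabs
  have hS2int : IntegrableOn (fun x => (S x) ^ 2) I :=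
    key _ (hSmeas.pow_const 2) 1 (fun x => by
      rw [abs_pow]
      calc |S x| ^ 2 ≤ 1 ^ 2 := pow_le_pow_left₀ (abs_nonneg _) (hSabs x) 2
        _ = 1 := one_pow 2)
  have hμint : IntegrableOn μh I :=
    key μh hμhm 1 (fun x => abs_le.mpr ⟨by linarith [hμh x], hμh1 x⟩)
  have hGmeas : Measurable (fun x => (μh x + β * S x) / (1 - (α / μh x) * S x)) := by
    exact (hμhm.add (measurable_const.mul hSmeas)).div
      (measurable_const.sub ((measurable_const.div hμhm).mul hSmeas))
  have hGint : IntegrableOn (fun x => (μh x + β * S x) / (1 - (α / μh x) * S x)) I := by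
    apply key _ hGmeas ((1 + β) / (ε / 2))
    intro x
    have hμpos : 0 < μh x := lt_of_lt_of_le hε (hμh x)
    have habs := abs_le.mp (hSabs x)
    have hD : ε / 2 ≤ μh x - α * S x := by nlinarith [hμh x]
    have hden : 1 - (α / μh x) * S x = (μh x - α * S x) / μh x := by field_simp
    have hdenge : ε / 2 ≤ 1 - (α / μh x) * S x := by
      rw [hden]
      rw [le_div_iff₀ hμpos]
      nlinarith [hμh1 x]
    rw [abs_div]
    rw [abs_of_pos (lt_of_lt_of_le (by linarith) hdenge)]
    apply div_le_div₀ (by linarith)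
    · calc |μh x + β * S x| ≤ |μh x| + |β * S x| := abs_add_le _ _
        _ ≤ 1 + β := by
            rw [abs_mul, abs_of_pos hβ]
            have := abs_le.mpr ⟨by linarith [hμh x], hμh1 x⟩
            nlinarith [hSabs x, abs_nonneg (μh x)]
    · linarith
    · exact hdenge
  -- integral computations
  have hintS : (∫ x in I, S x) = 0 := by
    simp only [hSdef]
    rw [integral_finset_sum _ (fun j _ => key (fun x => lam j * Bf j x) (measurable_const.mul (hBmeas j)) |lam j|
      (fun x => by rw [abs_mul]; nlinarith [hBabs j x, abs_nonneg (lam j), abs_nonneg (Bf j x)]))]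
    simp only [integral_const_mul]
    simp [hBint]
  have hintS2 : (∫ x in I, (S x) ^ 2) = 1 := by
    have : (∫ x in I, (S x) ^ 2) = ∫ x in I, ∑ j, (Bf j x) ^ 2 := by
      apply integral_congr_ae
      exact Filter.Eventually.of_forall fun x => hSsq x
    rw [this]
    rw [integral_finset_sum _ (fun j _ => key _ ((hBmeas j).pow_const 2) 1
      (fun x => by rw [abs_pow]; calc |Bf j x| ^ 2 ≤ 1 ^ 2 := pow_le_pow_left₀ (abs_nonneg _) (hBabs j x) 2
        _ = 1 := one_pow 2))]
    simp only [hBsq]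
    rw [Finset.sum_const, Finset.card_univ, Fintype.card_fin]
    have hm0 : (m : ℝ) ≠ 0 := Nat.cast_ne_zero.mpr (by omega)
    rw [nsmul_eq_mul]
    field_simp
  -- finish
  have hRHSint : IntegrableOn (fun x => (α + β) * S x + (ε / 2) * (α * β) * (S x) ^ 2) I :=
    (hSint.const_mul _).add (hS2int.const_mul _)
  calc (ε / 2) * (α * β)
      = ∫ x in I, ((α + β) * S x + (ε / 2) * (α * β) * (S x) ^ 2) := by
        rw [integral_add (hSint.const_mul _) (hS2int.const_mul _),
          integral_const_mul, integral_const_mul, hintS, hintS2]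
        ring
    _ ≤ ∫ x in I, ((μh x + β * S x) / (1 - (α / μh x) * S x) - μh x) := by
        apply integral_mono hRHSint (hGint.sub hμint)
        intro x
        exact hmain x
    _ = (∫ x in I, (μh x + β * S x) / (1 - (α / μh x) * S x)) - ∫ x in I, μh x :=
        integral_sub hGint hμint
end
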